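/- arXiv:math/0402255 — 8 statements merged into one kernel-verified Lean document; each statement's English description precedes it below -/
import Mathlib

section
/- If F is an abelian semigroup of continuous affine self-maps of a nonempty convex compact subset K of a Hausdorff topological vector space, then the family of images {f(K) : f ∈ co(F)} (images of K under finite convex combinations of elements of F) has the finite intersection property. -/
open Finset

def AffOn {X : Type*} [AddCommGroup X] [Module ℝ X] (K : Set X) (f : K → K) : Prop :=
  ∀ (x y : K) (t : ℝ), 0 ≤ t → t ≤ 1 →
    ∀ h : t • (x : X) + (1 - t) • (y : X) ∈ K,
      (f ⟨_, h⟩ : X) = t • (f x : X) + (1 - t) • (f y : X)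

def Co {X : Type*} [AddCommGroup X] [Module ℝ X] (K : Set X) (F : Set (K → K)) :
    Set (K → K) :=
  {f | ∃ (n : ℕ) (α : Fin n → ℝ) (g : Fin n → (K → K)),
      (∀ i, g i ∈ F) ∧ (∀ i, 0 ≤ α i) ∧ (∑ i, α i) = 1 ∧
      ∀ x, (f x : X) = ∑ i, α i • ((g i) x : X)}

/-!
Elements of `co(F)` commute: expanding `f ∘ g` for `f = ∑ αᵢ pᵢ` and `g = ∑ βⱼ qⱼ` by affinity of
the `pᵢ` gives `∑ αᵢ βⱼ pᵢ ∘ qⱼ`, which is symmetric in `f` and `g` because the `pᵢ` and `qⱼ`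
commute. For a finite commuting family `f₁, …, fₙ`, the range of `f₁ ∘ ⋯ ∘ fₙ` then lies in the
range of every `fₖ`, since `fₖ` can be moved to the front of the composition.
-/

section Affine

variable {X : Type*} [AddCommGroup X] [Module ℝ X] {K : Set X}

theorem AffOn.map_sum (hK : Convex ℝ K) {f : K → K} (hf : AffOn K f) {ι : Type*}
    (t : Finset ι) (w : ι → ℝ) (x : ι → K) (hw₀ : ∀ i ∈ t, 0 ≤ w i) (hw₁ : ∑ i ∈ t, w i = 1)
    (y : K) (hy : (y : X) = ∑ i ∈ t, w i • (x i : X)) :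
    (f y : X) = ∑ i ∈ t, w i • (f (x i) : X) := by
  induction t using Finset.cons_induction generalizing w y with
  | empty => simp at hw₁
  | cons i t hi ih =>
    rw [sum_cons] at hw₁ hy ⊢
    have hwt₀ : ∀ j ∈ t, 0 ≤ w j := fun j hj => hw₀ j (mem_cons_of_mem hj)
    rcases (sum_nonneg hwt₀).eq_or_lt with hs | hs
    · have hwt : ∀ j ∈ t, w j = 0 := (sum_eq_zero_iff_of_nonneg hwt₀).1 hs.symm
      have hwi : w i = 1 := by linarith
      have hvanish : ∀ v : ι → X, ∑ j ∈ t, w j • v j = 0 :=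
        fun v => sum_eq_zero fun j hj => by rw [hwt j hj, zero_smul]
      have hyi : y = x i := Subtype.ext (by simp [hy, hwi, hvanish])
      simp [hyi, hwi, hvanish]
    · set s := ∑ j ∈ t, w j
      let z : K := ⟨t.centerMass w (fun j => (x j : X)),
        hK.centerMass_mem hwt₀ hs fun j _ => (x j).2⟩
      have hsz : s • (z : X) = ∑ j ∈ t, w j • (x j : X) := smul_inv_smul₀ hs.ne' _
      have hyz : (y : X) = w i • (x i : X) + (1 - w i) • (z : X) := by
        rw [hy, show 1 - w i = s by linarith, hsz]
      have hfz : (f z : X) = ∑ j ∈ t, (s⁻¹ * w j) • (f (x j) : X) :=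
        ih (fun j => s⁻¹ * w j) (fun j hj => mul_nonneg (inv_nonneg.2 hs.le) (hwt₀ j hj))
          (by rw [← mul_sum, inv_mul_cancel₀ hs.ne']) z (by simp only [mul_smul, ← smul_sum]; rfl)
      obtain ⟨y, hyK⟩ := y
      dsimp only at hyz
      subst hyz
      rw [hf (x i) z (w i) (hw₀ i (mem_cons_self i t)) (by linarith) hyK, hfz,
        show 1 - w i = s by linarith, smul_sum]
      simp only [smul_smul, mul_inv_cancel_left₀ hs.ne']

theorem coe_comp_apply_eq_sum {ι κ : Type*} [Fintype ι] [Fintype κ] (hK : Convex ℝ K)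
    {f g : K → K} {α : ι → ℝ} {β : κ → ℝ} {p : ι → K → K} {q : κ → K → K}
    (hp : ∀ i, AffOn K (p i)) (hβ₀ : ∀ j, 0 ≤ β j) (hβ₁ : ∑ j, β j = 1)
    (hf : ∀ x, (f x : X) = ∑ i, α i • (p i x : X)) (hg : ∀ x, (g x : X) = ∑ j, β j • (q j x : X))
    (x : K) : (f (g x) : X) = ∑ i, α i • ∑ j, β j • (p i (q j x) : X) := by
  rw [hf]
  exact sum_congr rfl fun i _ => congrArg (α i • ·)
    ((hp i).map_sum hK univ β (fun j => q j x) (fun j _ => hβ₀ j) hβ₁ (g x) (hg x))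

theorem comp_comm_of_mem_Co (hK : Convex ℝ K) {F : Set (K → K)} (hF : ∀ f ∈ F, AffOn K f)
    (hcomm : ∀ f ∈ F, ∀ g ∈ F, f ∘ g = g ∘ f) {f g : K → K} (hf : f ∈ Co K F)
    (hg : g ∈ Co K F) : f ∘ g = g ∘ f := by
  obtain ⟨n, α, p, hpF, hα₀, hα₁, hf⟩ := hf
  obtain ⟨m, β, q, hqF, hβ₀, hβ₁, hg⟩ := hg
  funext x
  apply Subtype.ext
  rw [Function.comp_apply, Function.comp_apply,
    coe_comp_apply_eq_sum hK (fun i => hF _ (hpF i)) hβ₀ hβ₁ hf hg,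
    coe_comp_apply_eq_sum hK (fun j => hF _ (hqF j)) hα₀ hα₁ hg hf]
  simp only [smul_sum]
  rw [sum_comm]
  refine sum_congr rfl fun j _ => sum_congr rfl fun i _ => ?_
  rw [smul_comm, ← Function.comp_apply (f := p i), hcomm _ (hpF i) _ (hqF j), Function.comp_apply]

end Affine

theorem exists_range_subset_of_comp_comm {α : Type*} (s : Finset (α → α))
    (hs : ∀ f ∈ s, ∀ g ∈ s, f ∘ g = g ∘ f) :
    ∃ g : α → α, ∀ f ∈ s, Set.range g ⊆ Set.range f := by
  classical
  induction s using Finset.induction_on with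
  | empty => exact ⟨id, fun f hf => absurd hf (notMem_empty f)⟩
  | insert a s _ ih =>
    obtain ⟨g, hg⟩ := ih fun f hf g hg => hs f (mem_insert_of_mem hf) g (mem_insert_of_mem hg)
    refine ⟨a ∘ g, fun f hf => ?_⟩
    rcases mem_insert.1 hf with rfl | hf
    · exact Set.range_comp_subset_range g f
    · calc Set.range (a ∘ g) = a '' Set.range g := Set.range_comp a g
        _ ⊆ a '' Set.range f := Set.image_mono (hg f hf)
        _ = Set.range (f ∘ a) := by
          rw [← Set.range_comp, hs a (mem_insert_self a s) f (mem_insert_of_mem hf)]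
        _ ⊆ Set.range f := Set.range_comp_subset_range a f

theorem iInter_range_nonempty_of_comp_comm {α : Type*} [Nonempty α] (s : Finset (α → α))
    (hs : ∀ f ∈ s, ∀ g ∈ s, f ∘ g = g ∘ f) : (⋂ f ∈ s, Set.range f).Nonempty := by
  obtain ⟨g, hg⟩ := exists_range_subset_of_comp_comm s hs
  obtain ⟨x⟩ := ‹Nonempty α›
  exact ⟨g x, Set.mem_iInter₂.2 fun f hf => hg f hf (Set.mem_range_self x)⟩

theorem stmt2_general {X : Type*} [AddCommGroup X] [Module ℝ X] [TopologicalSpace X]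
    (K : Set X) (hne : K.Nonempty) (hconv : Convex ℝ K)
    (F : Set (K → K))
    (hF : ∀ f ∈ F, Continuous f ∧ AffOn K f)
    (habel : ∀ f ∈ F, ∀ g ∈ F, f ∘ g = g ∘ f) :
    ∀ s : Finset (K → K), ↑s ⊆ Co K F → (⋂ f ∈ s, Set.range f).Nonempty := by
  intro s hs
  have : Nonempty K := hne.to_subtype
  exact iInter_range_nonempty_of_comp_comm s fun f hf g hg =>
    comp_comm_of_mem_Co hconv (fun f hf => (hF f hf).2) habel (hs hf) (hs hg)

theorem stmt2 {X : Type*} [AddCommGroup X] [Module ℝ X] [TopologicalSpace X]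
    [IsTopologicalAddGroup X] [ContinuousSMul ℝ X] [T2Space X]
    (K : Set X) (hne : K.Nonempty) (hconv : Convex ℝ K) (hcomp : IsCompact K)
    (F : Set (K → K))
    (hF : ∀ f ∈ F, Continuous f ∧ AffOn K f)
    (hclosed : ∀ f ∈ F, ∀ g ∈ F, f ∘ g ∈ F)
    (habel : ∀ f ∈ F, ∀ g ∈ F, f ∘ g = g ∘ f) :
    ∀ s : Finset (K → K), ↑s ⊆ Co K F → (⋂ f ∈ s, Set.range f).Nonempty :=
  stmt2_general K hne hconv F hF habel
end

section
/- Let K be a nonempty convex compact subset of a Hausdorff locally convex topological vector space, f : K → K a continuous affine map, and suppose p ∈ K satisfies: for every n ≥ 1 there exists xₙ ∈ K with p = (1/n)·(xₙ + f(xₙ) + … + f^{n−1}(xₙ)). Then p is a fixed point of f, i.e., f(p) = p. -/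
open Finset

/-! Being affine, `f` commutes with averages, so `f p` is the average of `f xₙ, …, fⁿ xₙ` and
`p - f p = (xₙ - fⁿ xₙ) / n` telescopes. Hence every multiple `n • (p - f p)` lies in `K - K`,
which is bounded since `K` is compact, and in a Hausdorff space this forces `p - f p = 0`. -/

open Filter Topology Pointwise

theorem Bornology.IsVonNBounded.eq_zero_of_eventually_natCast_smul_mem {E : Type*}
    [AddCommGroup E] [Module ℝ E] [TopologicalSpace E] [T2Space E] {S : Set E}
    (hS : IsVonNBounded ℝ S) {v : E} (h : ∀ᶠ n : ℕ in atTop, (n : ℝ) • v ∈ S) : v = 0 := by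
  have hlim : Tendsto (fun n : ℕ ↦ (n : ℝ)⁻¹ • (n : ℝ) • v) atTop (𝓝 0) :=
    hS.smul_tendsto_zero h tendsto_inv_atTop_nhds_zero_nat
  have hconst : (fun n : ℕ ↦ (n : ℝ)⁻¹ • (n : ℝ) • v) =ᶠ[atTop] fun _ ↦ v := by
    filter_upwards [eventually_ne_atTop 0] with n hn
    rw [inv_smul_smul₀ (Nat.cast_ne_zero.mpr hn)]
  exact tendsto_nhds_unique (hlim.congr' hconst) tendsto_const_nhds |>.symm

section Average

variable {X : Type*} [AddCommGroup X] [Module ℝ X]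

theorem one_div_smul_sum_range_succ (v : ℕ → X) {n : ℕ} (hn : n ≠ 0) :
    (1 / ((n + 1 : ℕ) : ℝ)) • ∑ k ∈ range (n + 1), v k
      = (1 / ((n : ℝ) + 1)) • v n
        + (1 - 1 / ((n : ℝ) + 1)) • ((1 / (n : ℝ)) • ∑ k ∈ range n, v k) := by
  have hscal : (1 - 1 / ((n : ℝ) + 1)) * (1 / (n : ℝ)) = 1 / ((n : ℝ) + 1) := by
    field_simp [Nat.cast_ne_zero.mpr hn]
    ring
  rw [sum_range_succ, smul_add, smul_smul, hscal, add_comm, Nat.cast_succ]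

theorem Convex.one_div_smul_sum_range_mem {K : Set X} (hK : Convex ℝ K) {n : ℕ} (hn : n ≠ 0)
    {v : ℕ → X} (hv : ∀ k, v k ∈ K) : (1 / (n : ℝ)) • ∑ k ∈ range n, v k ∈ K := by
  rw [smul_sum]
  refine hK.sum_mem (fun _ _ ↦ by positivity) ?_ fun k _ ↦ hv k
  simp [Nat.cast_ne_zero.mpr hn]

theorem AffOn.coe_map_eq_average {K : Set X} (hK : Convex ℝ K) {f : K → K} (hf : AffOn K f)
    (g : ℕ → K) {n : ℕ} (hn : n ≠ 0) {q : K}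
    (hq : (q : X) = (1 / (n : ℝ)) • ∑ k ∈ range n, (g k : X)) :
    (f q : X) = (1 / (n : ℝ)) • ∑ k ∈ range n, (f (g k) : X) := by
  induction n generalizing q with
  | zero => exact absurd rfl hn
  | succ n ih =>
    rcases eq_or_ne n 0 with rfl | hn₀
    · obtain rfl : q = g 0 := Subtype.ext (by simpa using hq)
      simp
    have hmem := hK.one_div_smul_sum_range_mem hn₀ fun k ↦ (g k).2
    have ht₀ : 0 ≤ 1 / ((n : ℝ) + 1) := by positivity
    have ht₁ : 1 / ((n : ℝ) + 1) ≤ 1 :=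
      div_le_one_of_le₀ (by linarith [n.cast_nonneg (α := ℝ)]) (by positivity)
    rw [one_div_smul_sum_range_succ _ hn₀] at hq
    rw [show q = ⟨_, hq ▸ q.2⟩ from Subtype.ext hq, hf (g n) ⟨_, hmem⟩ _ ht₀ ht₁,
      ih hn₀ (q := ⟨_, hmem⟩) rfl, one_div_smul_sum_range_succ _ hn₀]

theorem AffOn.coe_sub_map_eq_of_eq_orbit_average {K : Set X} (hK : Convex ℝ K) {f : K → K}
    (hf : AffOn K f) {n : ℕ} (hn : n ≠ 0) {p x : K}
    (hp : (p : X) = (1 / (n : ℝ)) • ∑ k ∈ range n, (f^[k] x : X)) :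
    (p : X) - f p = (1 / (n : ℝ)) • ((x : X) - f^[n] x) := by
  have hfp : (f p : X) = (1 / (n : ℝ)) • ∑ k ∈ range n, (f^[k + 1] x : X) := by
    simpa only [Function.iterate_succ_apply'] using hf.coe_map_eq_average hK _ hn hp
  rw [hp, hfp, ← smul_sub, ← sum_sub_distrib, sum_range_sub' (fun k ↦ (f^[k] x : X)),
    Function.iterate_zero_apply]

end Average

theorem stmt5_general {X : Type*} [AddCommGroup X] [Module ℝ X] [TopologicalSpace X]
    [IsTopologicalAddGroup X] [ContinuousSMul ℝ X] [T2Space X]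
    (K : Set X) (hconv : Convex ℝ K) (hcomp : IsCompact K)
    (f : K → K) (haff : AffOn K f)
    (p : K)
    (hp : ∀ n : ℕ, 1 ≤ n → ∃ x : K,
      (p : X) = (1 / (n : ℝ)) • ∑ k ∈ Finset.range n, (f^[k] x : X)) :
    f p = p := by
  have hbdd : Bornology.IsVonNBounded ℝ (K - K) :=
    (hcomp.isVonNBounded ℝ).sub (hcomp.isVonNBounded ℝ)
  suffices (p : X) - f p = 0 from Subtype.ext (sub_eq_zero.mp this).symm
  refine hbdd.eq_zero_of_eventually_natCast_smul_mem (eventually_atTop.2 ⟨1, fun n hn ↦ ?_⟩)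
  obtain ⟨x, hx⟩ := hp n hn
  have hn₀ : (n : ℝ) ≠ 0 := by positivity
  rw [haff.coe_sub_map_eq_of_eq_orbit_average hconv (by omega) hx, smul_smul,
    mul_one_div_cancel hn₀, one_smul]
  exact Set.sub_mem_sub x.2 (f^[n] x).2

theorem stmt5 {X : Type*} [AddCommGroup X] [Module ℝ X] [TopologicalSpace X]
    [IsTopologicalAddGroup X] [ContinuousSMul ℝ X] [T2Space X] [LocallyConvexSpace ℝ X]
    (K : Set X) (hne : K.Nonempty) (hconv : Convex ℝ K) (hcomp : IsCompact K)
    (f : K → K) (hf : Continuous f) (haff : AffOn K f)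
    (p : K)
    (hp : ∀ n : ℕ, 1 ≤ n → ∃ x : K,
      (p : X) = (1 / (n : ℝ)) • ∑ k ∈ Finset.range n, (f^[k] x : X)) :
    f p = p :=
  stmt5_general K hconv hcomp f haff p hp
end

section
/- (Markov–Kakutani) Every abelian semigroup of continuous affine self-maps of a nonempty convex compact subset K of a Hausdorff locally convex topological vector space has a common fixed point in K. -/
open Finset Set Filter Topology Pointwise

section CesaroMean

variable {X : Type*} [AddCommGroup X] [Module ℝ X]

noncomputable def cesaroMean (z : ℕ → X) (n : ℕ) : X :=
  ((n : ℝ) + 1)⁻¹ • ∑ k ∈ range (n + 1), z k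

@[simp]
theorem cesaroMean_zero (z : ℕ → X) : cesaroMean z 0 = z 0 := by
  simp [cesaroMean]

theorem cesaroMean_succ (z : ℕ → X) (n : ℕ) :
    cesaroMean z (n + 1) =
      ((n : ℝ) + 2)⁻¹ • z (n + 1) + (1 - ((n : ℝ) + 2)⁻¹) • cesaroMean z n := by
  have hn : (n : ℝ) + 1 ≠ 0 := by positivity
  rw [cesaroMean, cesaroMean, sum_range_succ]
  push_cast
  match_scalars <;> field_simp <;> ring

theorem Convex.cesaroMean_mem {K : Set X} (hK : Convex ℝ K) {z : ℕ → X} (hz : ∀ k, z k ∈ K)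
    (n : ℕ) : cesaroMean z n ∈ K := by
  rw [cesaroMean, smul_sum]
  refine hK.sum_mem (fun _ _ => by positivity) ?_ fun k _ => hz k
  simp only [sum_const, card_range, nsmul_eq_mul]
  push_cast
  field_simp

theorem cesaroMean_cesaroMean_comm (c : ℕ → ℕ → X) (n m : ℕ) :
    cesaroMean (fun k => cesaroMean (c k) m) n
      = cesaroMean (fun l => cesaroMean (fun k => c k l) n) m := by
  simp only [cesaroMean, smul_sum, smul_smul]
  rw [sum_comm]
  simp only [mul_comm]

theorem cesaroMean_shift_sub (z : ℕ → X) (n : ℕ) :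
    cesaroMean (fun k => z (k + 1)) n - cesaroMean z n = ((n : ℝ) + 1)⁻¹ • (z (n + 1) - z 0) := by
  rw [cesaroMean, cesaroMean, ← smul_sub, ← sum_sub_distrib, sum_range_sub]

end CesaroMean

section AffOn

variable {X : Type*} [AddCommGroup X] [Module ℝ X] {K : Set X} {f g : K → K}

theorem AffOn.id : AffOn K id := fun _ _ _ _ _ _ => rfl

theorem AffOn.comp (hf : AffOn K f) (hg : AffOn K g) : AffOn K (f ∘ g) := by
  intro x y t ht0 ht1 h
  have hgxy : t • (g x : X) + (1 - t) • (g y : X) ∈ K := hg x y t ht0 ht1 h ▸ (g ⟨_, h⟩).2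
  have hg' : g ⟨_, h⟩ = ⟨_, hgxy⟩ := Subtype.ext (hg x y t ht0 ht1 h)
  simp only [Function.comp_apply, hg']
  exact hf (g x) (g y) t ht0 ht1 hgxy

theorem AffOn.iterate (hf : AffOn K f) : ∀ n, AffOn K f^[n]
  | 0 => AffOn.id
  | n + 1 => (hf.iterate n).comp hf

theorem AffOn.map_cesaroMean (hK : Convex ℝ K) (hf : AffOn K f) (z : ℕ → K) :
    ∀ n (h : cesaroMean (fun k => (z k : X)) n ∈ K),
      (f ⟨_, h⟩ : X) = cesaroMean (fun k => (f (z k) : X)) n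
  | 0, h => by simp only [cesaroMean_zero]
  | n + 1, h => by
    have hmean := hK.cesaroMean_mem (fun k => (z k).2) n
    have ht0 : (0 : ℝ) ≤ ((n : ℝ) + 2)⁻¹ := by positivity
    have ht1 : ((n : ℝ) + 2)⁻¹ ≤ 1 := inv_le_one_of_one_le₀ (by linarith [n.cast_nonneg (α := ℝ)])
    have h' := cesaroMean_succ (fun k => (z k : X)) n ▸ h
    have e : (⟨_, h⟩ : K) = ⟨_, h'⟩ := Subtype.ext (cesaroMean_succ _ n)
    rw [e, hf (z (n + 1)) ⟨_, hmean⟩ _ ht0 ht1 h', AffOn.map_cesaroMean hK hf z n hmean,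
      cesaroMean_succ]

end AffOn

section IterateMean

variable {X : Type*} [AddCommGroup X] [Module ℝ X] {K : Set X} (hK : Convex ℝ K) {f g : K → K}

noncomputable def iterateMean (f : K → K) (n : ℕ) (q : K) : K :=
  ⟨cesaroMean (fun k => (f^[k] q : X)) n, hK.cesaroMean_mem (fun k => (f^[k] q).2) n⟩

theorem continuous_iterateMean [TopologicalSpace X] [ContinuousAdd X] [ContinuousConstSMul ℝ X]
    (hf : Continuous f) (n : ℕ) : Continuous (iterateMean hK f n) :=
  .subtype_mk (.const_smul (continuous_finsetSum _ fun k _ =>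
    continuous_subtype_val.comp (hf.iterate k)) _) _

theorem AffOn.coe_iterateMean_apply_iterateMean (hf : AffOn K f) (n m : ℕ) (q : K) :
    (iterateMean hK f n (iterateMean hK g m q) : X)
      = cesaroMean (fun k => cesaroMean (fun l => (f^[k] (g^[l] q) : X)) m) n := by
  show cesaroMean (fun k => (f^[k] (iterateMean hK g m q) : X)) n = _
  congr 1
  funext k
  exact (hf.iterate k).map_cesaroMean hK (fun l => g^[l] q) m _

theorem AffOn.commute_iterateMean (hf : AffOn K f) (hg : AffOn K g) (hfg : Function.Commute f g)
    (n m : ℕ) : Function.Commute (iterateMean hK f n) (iterateMean hK g m) := by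
  intro q
  apply Subtype.ext
  rw [hf.coe_iterateMean_apply_iterateMean, hg.coe_iterateMean_apply_iterateMean,
    cesaroMean_cesaroMean_comm]
  simp only [(hfg.iterate_iterate _ _).eq]

theorem AffOn.apply_iterateMean_sub (hf : AffOn K f) (n : ℕ) (q : K) :
    (f (iterateMean hK f n q) : X) - iterateMean hK f n q
      = ((n : ℝ) + 1)⁻¹ • ((f^[n + 1] q : X) - q) := by
  rw [iterateMean, hf.map_cesaroMean hK]
  simp only [← Function.iterate_succ_apply' f]
  exact cesaroMean_shift_sub (fun k => (f^[k] q : X)) n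

end IterateMean

theorem nonempty_iInter_range_of_commute {Y ι : Type*} [TopologicalSpace Y] [CompactSpace Y]
    [T2Space Y] [Nonempty Y] {T : ι → Y → Y} (hT : ∀ i, Continuous (T i))
    (hcomm : ∀ i j, Function.Commute (T i) (T j)) : (⋂ i, range (T i)).Nonempty := by
  classical
  refine CompactSpace.iInter_nonempty (fun i => (isCompact_range (hT i)).isClosed) fun s => ?_
  have hcomm' : (s : Set ι).Pairwise fun i j => @Commute (Function.End Y) _ (T i) (T j) :=
    fun i _ j _ _ => funext (hcomm i j)
  refine ⟨(s.noncommProd (β := Function.End Y) T hcomm' : Y → Y) (Classical.arbitrary Y),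
    mem_iInter₂.2 fun i hi => ?_⟩
  rw [← s.mul_noncommProd_erase hi _ hcomm']
  exact mem_range_self _

theorem Bornology.IsVonNBounded.eq_zero_of_forall_mem_smul {𝕜 E ι : Type*} [NormedField 𝕜]
    [AddCommGroup E] [Module 𝕜 E] [TopologicalSpace E] [T1Space E] {B : Set E}
    (hB : IsVonNBounded 𝕜 B) {ε : ι → 𝕜} {l : Filter ι} [l.NeBot] (hε : Tendsto ε l (𝓝 0))
    {v : E} (hv : ∀ i, v ∈ ε i • B) : v = 0 := by
  choose x hxB hx using fun i => mem_smul_set.1 (hv i)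
  have hconst : ε • x = fun _ => v := funext hx
  exact tendsto_const_nhds_iff.1 (hconst ▸ hB.smul_tendsto_zero (.of_forall hxB) hε)

theorem stmt7_general {X : Type*} [AddCommGroup X] [Module ℝ X] [TopologicalSpace X]
    [IsTopologicalAddGroup X] [ContinuousSMul ℝ X] [T2Space X]
    (K : Set X) (hne : K.Nonempty) (hconv : Convex ℝ K) (hcomp : IsCompact K)
    (F : Set (K → K))
    (hF : ∀ f ∈ F, Continuous f ∧ AffOn K f)
    (habel : ∀ f ∈ F, ∀ g ∈ F, f ∘ g = g ∘ f) :
    ∃ p : K, ∀ f ∈ F, f p = p := by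
  have : CompactSpace K := isCompact_iff_compactSpace.1 hcomp
  have : Nonempty K := hne.to_subtype
  obtain ⟨p, hp⟩ := nonempty_iInter_range_of_commute
    (T := fun i : F × ℕ => iterateMean hconv i.1.1 i.2)
    (fun i => continuous_iterateMean hconv (hF _ i.1.2).1 _)
    (fun i j => (hF _ i.1.2).2.commute_iterateMean hconv (hF _ j.1.2).2
      (congrFun (habel _ i.1.2 _ j.1.2)) _ _)
  refine ⟨p, fun f hf => Subtype.ext (sub_eq_zero.1 ?_)⟩
  have hbdd := hcomp.isVonNBounded ℝ
  refine (hbdd.sub hbdd).eq_zero_of_forall_mem_smul (ε := fun n : ℕ => ((n : ℝ) + 1)⁻¹)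
    (by simpa using tendsto_one_div_add_atTop_nhds_zero_nat (𝕜 := ℝ)) fun n => ?_
  obtain ⟨q, rfl⟩ := mem_iInter.1 hp (⟨f, hf⟩, n)
  rw [(hF f hf).2.apply_iterateMean_sub hconv]
  exact smul_mem_smul_set (sub_mem_sub (f^[n + 1] q).2 q.2)

theorem stmt7 {X : Type*} [AddCommGroup X] [Module ℝ X] [TopologicalSpace X]
    [IsTopologicalAddGroup X] [ContinuousSMul ℝ X] [T2Space X] [LocallyConvexSpace ℝ X]
    (K : Set X) (hne : K.Nonempty) (hconv : Convex ℝ K) (hcomp : IsCompact K)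
    (F : Set (K → K))
    (hF : ∀ f ∈ F, Continuous f ∧ AffOn K f)
    (hclosed : ∀ f ∈ F, ∀ g ∈ F, f ∘ g ∈ F)
    (habel : ∀ f ∈ F, ∀ g ∈ F, f ∘ g = g ∘ f) :
    ∃ p : K, ∀ f ∈ F, f p = p :=
  stmt7_general K hne hconv hcomp F hF habel
end

section
/- (Generalized Markov–Kakutani for a semidirect product of two abelian semigroups) Let K be a nonempty convex compact subset of a Hausdorff locally convex topological vector space. Let H and G be abelian semigroups of continuous affine self-maps of K, both containing the identity, such that for every h ∈ H and g ∈ G there exists h′ ∈ H with h ∘ g = g ∘ h′. Then there exists p ∈ K with h(p) = p and g(p) = p for all h ∈ H and g ∈ G; in particular every map of the form h ∘ g fixes p. -/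
open Set Function Filter Topology

section

variable {X : Type*} [AddCommGroup X] [Module ℝ X] {K : Set X}

def ConvexIn (K : Set X) (C : Set K) : Prop :=
  ∀ x ∈ C, ∀ y ∈ C, ∀ t : ℝ, 0 ≤ t → t ≤ 1 →
    ∀ h : t • (x : X) + (1 - t) • (y : X) ∈ K, (⟨_, h⟩ : K) ∈ C

namespace ConvexIn

theorem univ : ConvexIn K univ := fun _ _ _ _ _ _ _ _ => mem_univ _

theorem inter {C D : Set K} (hC : ConvexIn K C) (hD : ConvexIn K D) : ConvexIn K (C ∩ D) :=
  fun x hx y hy t ht₀ ht₁ h => ⟨hC x hx.1 y hy.1 t ht₀ ht₁ h, hD x hx.2 y hy.2 t ht₀ ht₁ h⟩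

theorem iInter {ι : Sort*} {C : ι → Set K} (hC : ∀ i, ConvexIn K (C i)) :
    ConvexIn K (⋂ i, C i) := fun x hx y hy t ht₀ ht₁ h =>
  mem_iInter.2 fun i => hC i x (mem_iInter.1 hx i) y (mem_iInter.1 hy i) t ht₀ ht₁ h

end ConvexIn

theorem AffOn.convexIn_fixedPoints {f : K → K} (hf : AffOn K f) : ConvexIn K (fixedPoints f) := by
  intro x hx y hy t ht₀ ht₁ h
  apply Subtype.ext
  rw [hf x y t ht₀ ht₁ h, hx.eq, hy.eq]

theorem convexIn_biInter_fixedPoints {T : Set (K → K)} (haff : ∀ f ∈ T, AffOn K f) :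
    ConvexIn K (⋂ f ∈ T, fixedPoints f) :=
  ConvexIn.iInter fun f => ConvexIn.iInter fun hf => (haff f hf).convexIn_fixedPoints

theorem mapsTo_biInter_fixedPoints {α : Type*} {T : Set (α → α)} {f : α → α}
    (h : ∀ g ∈ T, ∃ g' ∈ T, g ∘ f = f ∘ g') :
    MapsTo f (⋂ g ∈ T, fixedPoints g) (⋂ g ∈ T, fixedPoints g) := by
  intro x hx
  simp only [mem_iInter₂] at hx ⊢
  intro g hg
  obtain ⟨g', hg', hcomp⟩ := h g hg
  have hsemi : Semiconj f g' g := fun y => (congrFun hcomp y).symm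
  exact hsemi.mapsTo_fixedPoints (hx g' hg')

theorem AffOn.exists_mem_sub_eq_smul_iterate (hconv : Convex ℝ K) {f : K → K} (hf : AffOn K f)
    {C : Set K} (hC : ConvexIn K C) (hmaps : MapsTo f C C) {x : K} (hx : x ∈ C) (n : ℕ) :
    ∃ b ∈ C, (f b : X) - b = ((n : ℝ) + 1)⁻¹ • ((f^[n + 1] x : X) - x) := by
  induction n with
  | zero => exact ⟨x, hx, by simp⟩
  | succ n ih =>
    obtain ⟨b, hbC, hb⟩ := ih
    set y := f^[n + 1] x
    set t : ℝ := ((n : ℝ) + 1) / ((n : ℝ) + 2)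
    have ht₀ : 0 ≤ t := by positivity
    have ht₁ : t ≤ 1 := div_le_one_of_le₀ (by linarith) (by positivity)
    have hK : t • (b : X) + (1 - t) • (y : X) ∈ K := hconv b.2 y.2 ht₀ (by linarith) (by ring)
    refine ⟨⟨_, hK⟩, hC b hbC y (hmaps.iterate _ hx) t ht₀ ht₁ hK, ?_⟩
    rw [hf b y t ht₀ ht₁ hK, iterate_succ_apply' f (n + 1)]
    have hc : t * ((n : ℝ) + 1)⁻¹ = ((n + 1 : ℕ) + 1 : ℝ)⁻¹ := by
      simp only [t]; push_cast; field_simp; ring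
    have hd : 1 - t = ((n + 1 : ℕ) + 1 : ℝ)⁻¹ := by
      simp only [t]; push_cast; field_simp; ring
    rw [sub_eq_iff_eq_add.mp hb]
    simp only [smul_add, smul_sub, smul_smul, hc, hd]
    abel

variable [TopologicalSpace X] [IsTopologicalAddGroup X] [ContinuousSMul ℝ X] [T2Space X]

theorem AffOn.exists_mem_isFixedPt (hconv : Convex ℝ K) (hcomp : IsCompact K) {f : K → K}
    (hf : AffOn K f) (hfc : Continuous f) {C : Set K} (hCne : C.Nonempty) (hCcl : IsClosed C)
    (hC : ConvexIn K C) (hmaps : MapsTo f C C) : ∃ p ∈ C, IsFixedPt f p := by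
  have := isCompact_iff_compactSpace.mp hcomp
  obtain ⟨x, hx⟩ := hCne
  choose b hbC hb using hf.exists_mem_sub_eq_smul_iterate hconv hC hmaps hx
  have hdisp : Tendsto (fun n => (f (b n) : X) - b n) atTop (𝓝 0) := by
    simp only [hb]
    have hbdd := (hcomp.isVonNBounded ℝ).sub (hcomp.isVonNBounded ℝ)
    exact hbdd.smul_tendsto_zero (.of_forall fun n => sub_mem_sub (f^[n + 1] x).2 x.2)
      (by simpa only [one_div] using tendsto_one_div_add_atTop_nhds_zero_nat (𝕜 := ℝ))
  obtain ⟨p, hpC, hp⟩ := hCcl.isCompact.exists_mapClusterPt (f := atTop)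
    (tendsto_principal.2 (.of_forall hbC))
  have hcont : Continuous fun y : K => (f y : X) - y := by fun_prop
  have hclust := hp.continuousAt_comp (hcont.continuousAt (x := p))
  exact ⟨p, hpC, Subtype.ext (sub_eq_zero.1 (eq_of_nhds_neBot (ClusterPt.mono hclust hdisp)))⟩

theorem exists_mem_forall_isFixedPt_of_comp_comm (hconv : Convex ℝ K) (hcomp : IsCompact K)
    {S : Set (K → K)} (hcont : ∀ f ∈ S, Continuous f) (haff : ∀ f ∈ S, AffOn K f)
    (hcomm : ∀ f ∈ S, ∀ g ∈ S, f ∘ g = g ∘ f) {C : Set K} (hCne : C.Nonempty)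
    (hCcl : IsClosed C) (hC : ConvexIn K C) (hmaps : ∀ f ∈ S, MapsTo f C C) :
    ∃ p ∈ C, ∀ f ∈ S, IsFixedPt f p := by
  have := isCompact_iff_compactSpace.mp hcomp
  have hfinite : ∀ T : Set (K → K), T.Finite → T ⊆ S →
      (C ∩ ⋂ g ∈ T, fixedPoints g).Nonempty := by
    intro T hT
    induction T, hT using Set.Finite.induction_on with
    | empty => simpa using hCne
    | @insert f T _ _ ih =>
      intro hfT
      obtain ⟨hfS, hTS⟩ := insert_subset_iff.1 hfT
      have hmapsT : MapsTo f (C ∩ ⋂ g ∈ T, fixedPoints g) (C ∩ ⋂ g ∈ T, fixedPoints g) :=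
        (hmaps f hfS).inter_inter
          (mapsTo_biInter_fixedPoints fun g hg => ⟨g, hg, hcomm g (hTS hg) f hfS⟩)
      obtain ⟨p, ⟨hpC, hpT⟩, hpf⟩ := (haff f hfS).exists_mem_isFixedPt hconv hcomp (hcont f hfS)
        (ih hTS) (hCcl.inter (isClosed_biInter fun g hg => isClosed_fixedPoints (hcont g (hTS hg))))
        (hC.inter (convexIn_biInter_fixedPoints fun g hg => haff g (hTS hg))) hmapsT
      exact ⟨p, hpC, biInter_insert f T fixedPoints ▸ ⟨hpf, hpT⟩⟩
  obtain ⟨p, hpC, hp⟩ := hCcl.isCompact.inter_iInter_nonempty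
    (fun f : S => fixedPoints (f : K → K)) (fun f => isClosed_fixedPoints (hcont f f.2)) fun u => by
      simpa only [biInter_image, Finset.mem_coe] using
        hfinite _ (u.finite_toSet.image _) (image_subset_iff.2 fun f _ => f.2)
  exact ⟨p, hpC, fun f hf => mem_iInter.1 hp ⟨f, hf⟩⟩

end

theorem stmt8_general {X : Type*} [AddCommGroup X] [Module ℝ X] [TopologicalSpace X]
    [IsTopologicalAddGroup X] [ContinuousSMul ℝ X] [T2Space X]
    (K : Set X) (hne : K.Nonempty) (hconv : Convex ℝ K) (hcomp : IsCompact K)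
    (H G : Set (K → K))
    (hH : ∀ f ∈ H, Continuous f ∧ AffOn K f)
    (hG : ∀ f ∈ G, Continuous f ∧ AffOn K f)
    (hHabel : ∀ f ∈ H, ∀ g ∈ H, f ∘ g = g ∘ f)
    (hGabel : ∀ f ∈ G, ∀ g ∈ G, f ∘ g = g ∘ f)
    (hnormal : ∀ h ∈ H, ∀ g ∈ G, ∃ h' ∈ H, h ∘ g = g ∘ h') :
    ∃ p : K, (∀ h ∈ H, h p = p) ∧ (∀ g ∈ G, g p = p) := by
  have : Nonempty K := hne.to_subtype
  obtain ⟨q, -, hq⟩ := exists_mem_forall_isFixedPt_of_comp_comm hconv hcomp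
    (fun h hh => (hH h hh).1) (fun h hh => (hH h hh).2) hHabel univ_nonempty isClosed_univ
    ConvexIn.univ fun h _ => mapsTo_univ h univ
  obtain ⟨p, hpH, hpG⟩ := exists_mem_forall_isFixedPt_of_comp_comm hconv hcomp
    (fun g hg => (hG g hg).1) (fun g hg => (hG g hg).2) hGabel
    (C := ⋂ h ∈ H, fixedPoints h) ⟨q, mem_iInter₂.2 hq⟩
    (isClosed_biInter fun h hh => isClosed_fixedPoints (hH h hh).1)
    (convexIn_biInter_fixedPoints fun h hh => (hH h hh).2)
    fun g hg => mapsTo_biInter_fixedPoints fun h hh => hnormal h hh g hg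
  exact ⟨p, fun h hh => mem_iInter₂.1 hpH h hh, hpG⟩

theorem stmt8 {X : Type*} [AddCommGroup X] [Module ℝ X] [TopologicalSpace X]
    [IsTopologicalAddGroup X] [ContinuousSMul ℝ X] [T2Space X] [LocallyConvexSpace ℝ X]
    (K : Set X) (hne : K.Nonempty) (hconv : Convex ℝ K) (hcomp : IsCompact K)
    (H G : Set (K → K)) (hidH : id ∈ H) (hidG : id ∈ G)
    (hH : ∀ f ∈ H, Continuous f ∧ AffOn K f)
    (hG : ∀ f ∈ G, Continuous f ∧ AffOn K f)
    (hHclosed : ∀ f ∈ H, ∀ g ∈ H, f ∘ g ∈ H)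
    (hGclosed : ∀ f ∈ G, ∀ g ∈ G, f ∘ g ∈ G)
    (hHabel : ∀ f ∈ H, ∀ g ∈ H, f ∘ g = g ∘ f)
    (hGabel : ∀ f ∈ G, ∀ g ∈ G, f ∘ g = g ∘ f)
    (hnormal : ∀ h ∈ H, ∀ g ∈ G, ∃ h' ∈ H, h ∘ g = g ∘ h') :
    ∃ p : K, (∀ h ∈ H, h p = p) ∧ (∀ g ∈ G, g p = p) :=
  stmt8_general K hne hconv hcomp H G hH hG hHabel hGabel hnormal
end

section
/- Let K be a nonempty convex compact subset of a Hausdorff locally convex topological vector space and let F be a group of continuous affine self-maps of K. If F is solvable (there is a chain {1} = F₀ ◁ F₁ ◁ … ◁ Fₙ = F with each quotient F_{i+1}/F_i abelian), then F has a common fixed point in K. -/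
/-!
For one continuous affine self-map `f` of a compact convex set, the Cesàro means `aₙ` of an orbit
satisfy `f aₙ - aₙ = (f^[n+1] x - x) / (n + 1) → 0`, so every cluster point of `(aₙ)` is fixed.
Commuting maps preserve each other's fixed-point sets, which are again compact and convex; hence
finitely many of them have a common fixed point, and compactness passes to the whole family.
A solvable group is handled by descending its derived series: the common fixed points of
`D^(k+1)` form a nonempty compact convex set on which `D^k` acts through the abelian group
`D^k / D^(k+1)`.
-/

open Filter Topology Set

section RunningMean

open Finset

variable {E : Type*} [AddCommGroup E] [Module ℝ E]

noncomputable def runningMean (u : ℕ → E) (n : ℕ) : E :=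
  ((n : ℝ) + 1)⁻¹ • ∑ k ∈ range (n + 1), u k

@[simp]
lemma runningMean_zero (u : ℕ → E) : runningMean u 0 = u 0 := by
  simp [runningMean]

lemma runningMean_succ (u : ℕ → E) (n : ℕ) :
    runningMean u (n + 1) =
      ((n : ℝ) + 2)⁻¹ • u (n + 1) + (1 - ((n : ℝ) + 2)⁻¹) • runningMean u n := by
  have hn : (n : ℝ) + 1 ≠ 0 := by positivity
  simp only [runningMean, sum_range_succ _ (n + 1), smul_add, smul_smul]
  push_cast
  match_scalars <;> field_simp <;> ring

lemma runningMean_shift_sub (u : ℕ → E) (n : ℕ) :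
    runningMean (fun k => u (k + 1)) n - runningMean u n = ((n : ℝ) + 1)⁻¹ • (u (n + 1) - u 0) := by
  rw [runningMean, runningMean, ← smul_sub, ← sum_sub_distrib, sum_range_sub]

lemma Convex.runningMean_mem {S : Set E} (hS : Convex ℝ S) {u : ℕ → E} (hu : ∀ k, u k ∈ S)
    (n : ℕ) : runningMean u n ∈ S := by
  induction n with
  | zero => simpa using hu 0
  | succ n ih =>
    rw [runningMean_succ]
    have h : ((n : ℝ) + 2)⁻¹ ≤ 1 := inv_le_one_of_one_le₀ (by linarith [n.cast_nonneg (α := ℝ)])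
    exact hS (hu _) ih (by positivity) (by linarith) (by ring)

end RunningMean

section AffineOn

variable {E F : Type*} [AddCommGroup E] [Module ℝ E] [AddCommGroup F] [Module ℝ F]

def AffineOn (f : E → F) (S : Set E) : Prop :=
  ∀ ⦃x⦄, x ∈ S → ∀ ⦃y⦄, y ∈ S → ∀ t : ℝ, 0 ≤ t → t ≤ 1 →
    f (t • x + (1 - t) • y) = t • f x + (1 - t) • f y

lemma AffineOn.mono {f : E → F} {S T : Set E} (hf : AffineOn f S) (hTS : T ⊆ S) :
    AffineOn f T :=
  fun _ hx _ hy t ht₀ ht₁ => hf (hTS hx) (hTS hy) t ht₀ ht₁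

lemma AffineOn.map_runningMean {f : E → F} {S : Set E} (hf : AffineOn f S) (hS : Convex ℝ S)
    {u : ℕ → E} (hu : ∀ k, u k ∈ S) (n : ℕ) :
    f (runningMean u n) = runningMean (fun k => f (u k)) n := by
  induction n with
  | zero => simp
  | succ n ih =>
    have h : ((n : ℝ) + 2)⁻¹ ≤ 1 := inv_le_one_of_one_le₀ (by linarith [n.cast_nonneg (α := ℝ)])
    rw [runningMean_succ, runningMean_succ, hf (hu _) (hS.runningMean_mem hu n) _ (by positivity) h,
      ih]

lemma AffineOn.convex_setOf_apply_eq {f : E → E} {S : Set E} (hf : AffineOn f S)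
    (hS : Convex ℝ S) : Convex ℝ {x ∈ S | f x = x} := by
  rintro x ⟨hxS, hfx⟩ y ⟨hyS, hfy⟩ a b ha hb hab
  obtain rfl : b = 1 - a := by linarith
  exact ⟨hS hxS hyS ha hb hab, by rw [hf hxS hyS a ha (by linarith), hfx, hfy]⟩

end AffineOn

lemma MapClusterPt.eq_of_tendsto {X ι : Type*} [TopologicalSpace X] [T2Space X] {l : Filter ι}
    {u : ι → X} {x y : X} (hx : MapClusterPt x l u) (hy : Tendsto u l (𝓝 y)) : x = y :=
  not_not.mp fun hxy =>
    clusterPt_iff_not_disjoint.mp hx ((disjoint_nhds_nhds.mpr hxy).mono_right hy)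

section CommonFixedPoints

variable {X ι : Type*}

def commonFixedPoints (F : ι → X → X) (u : Set ι) (S : Set X) : Set X :=
  {x ∈ S | ∀ i ∈ u, F i x = x}

variable {F : ι → X → X} {u : Set ι} {S : Set X}

lemma commonFixedPoints_eq_inter_biInter :
    commonFixedPoints F u S = S ∩ ⋂ i ∈ u, {x ∈ S | F i x = x} := by
  ext x
  simp +contextual [commonFixedPoints]

lemma commonFixedPoints_insert (a : ι) :
    commonFixedPoints F (insert a u) S = {x ∈ commonFixedPoints F u S | F a x = x} := by
  ext x
  simp only [commonFixedPoints, mem_insert_iff, forall_eq_or_imp, mem_ofPred_eq]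
  tauto

lemma convex_commonFixedPoints [AddCommGroup X] [Module ℝ X] (hF : ∀ i ∈ u, AffineOn (F i) S)
    (hS : Convex ℝ S) : Convex ℝ (commonFixedPoints F u S) := by
  rw [commonFixedPoints_eq_inter_biInter]
  exact hS.inter (convex_iInter₂ fun i hi => (hF i hi).convex_setOf_apply_eq hS)

lemma isCompact_commonFixedPoints [TopologicalSpace X] [T2Space X]
    (hF : ∀ i ∈ u, ContinuousOn (F i) S) (hS : IsCompact S) :
    IsCompact (commonFixedPoints F u S) := by
  rw [commonFixedPoints_eq_inter_biInter]
  exact hS.inter_right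
    (isClosed_biInter fun i hi => hS.isClosed.isClosed_eq (hF i hi) continuousOn_id)

end CommonFixedPoints

section MarkovKakutani

variable {X : Type*} [AddCommGroup X] [Module ℝ X] [TopologicalSpace X]
  [IsTopologicalAddGroup X] [ContinuousSMul ℝ X] [T2Space X] {S : Set X}

theorem AffineOn.exists_fixedPt {f : X → X} (hf : AffineOn f S)
    (hfS : MapsTo f S S) (hfc : ContinuousOn f S) (hS : Convex ℝ S) (hSc : IsCompact S)
    (hSne : S.Nonempty) : ∃ x ∈ S, f x = x := by
  obtain ⟨x₀, hx₀⟩ := hSne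
  set u : ℕ → X := fun k => f^[k] x₀
  have hu : ∀ k, u k ∈ S := fun k => hfS.iterate k hx₀
  set a := runningMean u
  have ha : ∀ n, a n ∈ S := hS.runningMean_mem hu
  -- the orbit is bounded, so `f` moves its Cesàro means less and less
  have hdisp : ∀ n, f (a n) - a n = ((n : ℝ) + 1)⁻¹ • u (n + 1) - ((n : ℝ) + 1)⁻¹ • u 0 := by
    intro n
    rw [hf.map_runningMean hS hu, ← smul_sub, ← runningMean_shift_sub]
    simp only [u, a, Function.iterate_succ_apply']
  have hε : Tendsto (fun n : ℕ => ((n : ℝ) + 1)⁻¹) atTop (𝓝 0) :=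
    tendsto_one_div_add_atTop_nhds_zero_nat.congr fun _ => one_div _
  have hbdd := hSc.isVonNBounded ℝ
  have hlim : Tendsto (fun n => f (a n) - a n) atTop (𝓝 0) := by
    simp only [hdisp]
    simpa using (hbdd.smul_tendsto_zero (Eventually.of_forall fun n => hu (n + 1)) hε).sub
      (hbdd.smul_tendsto_zero (Eventually.of_forall fun _ => hu 0) hε)
  have haS : Tendsto a atTop (𝓟 S) := tendsto_principal.mpr (Eventually.of_forall ha)
  obtain ⟨y, hyS, hy⟩ := hSc.exists_mapClusterPt haS
  have hcy : MapClusterPt (f y - y) atTop (fun n => f (a n) - a n) :=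
    hy.tendsto_comp' (((hfc y hyS).sub continuousWithinAt_id).tendsto.mono_left
      (inf_le_inf_left _ haS))
  exact ⟨y, hyS, sub_eq_zero.mp (hcy.eq_of_tendsto hlim)⟩

theorem exists_commonFixedPoint_of_commute {ι : Type*} {F : ι → X → X}
    (hF : ∀ i, AffineOn (F i) S) (hFS : ∀ i, MapsTo (F i) S S) (hFc : ∀ i, ContinuousOn (F i) S)
    (hcomm : ∀ i j, ∀ x ∈ S, F i (F j x) = F j (F i x))
    (hS : Convex ℝ S) (hSc : IsCompact S) (hSne : S.Nonempty) : ∃ x ∈ S, ∀ i, F i x = x := by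
  classical
  have hfin : ∀ u : Finset ι, (commonFixedPoints F u S).Nonempty := by
    intro u
    induction u using Finset.induction_on with
    | empty => simpa [commonFixedPoints] using hSne
    | insert a u _ ih =>
      set T := commonFixedPoints F u S
      have hTS : T ⊆ S := sep_subset _ _
      have hFaT : MapsTo (F a) T T := fun x ⟨hxS, hx⟩ =>
        ⟨hFS a hxS, fun i hi => by rw [hcomm i a x hxS, hx i hi]⟩
      obtain ⟨x, hxT, hx⟩ := ((hF a).mono hTS).exists_fixedPt hFaT ((hFc a).mono hTS)
        (convex_commonFixedPoints (fun i _ => hF i) hS)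
        (isCompact_commonFixedPoints (fun i _ => hFc i) hSc) ih
      rw [Finset.coe_insert, commonFixedPoints_insert]
      exact ⟨x, hxT, hx⟩
  obtain ⟨x, hxS, hx⟩ := hSc.inter_iInter_nonempty (fun i => {x ∈ S | F i x = x})
    (fun i => hSc.isClosed.isClosed_eq (hFc i) continuousOn_id)
    (fun u => commonFixedPoints_eq_inter_biInter (u := (u : Set ι)) ▸ hfin u)
  exact ⟨x, hxS, fun i => (mem_iInter.mp hx i).2⟩

end MarkovKakutani

section Solvable

open scoped commutatorElement

variable {X : Type*} [AddCommGroup X] [Module ℝ X] [TopologicalSpace X]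
  [IsTopologicalAddGroup X] [ContinuousSMul ℝ X] [T2Space X] {S : Set X}
  {Γ : Type*} [Group Γ] [MulAction Γ X]

theorem commonFixedPoints_nonempty_of_commutator_le (hΓ : ∀ g : Γ, AffineOn (g • ·) S)
    (hΓS : ∀ g : Γ, MapsTo (g • ·) S S) (hΓc : ∀ g : Γ, ContinuousOn (g • ·) S)
    (hS : Convex ℝ S) (hSc : IsCompact S) {H N : Subgroup Γ} [N.Normal] (hHN : ⁅H, H⁆ ≤ N)
    (hN : (commonFixedPoints (fun (g : Γ) (x : X) => g • x) N S).Nonempty) :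
    (commonFixedPoints (fun (g : Γ) (x : X) => g • x) H S).Nonempty := by
  set T := commonFixedPoints (fun (g : Γ) (x : X) => g • x) N S
  have hTS : T ⊆ S := sep_subset _ _
  have hΓT : ∀ g : Γ, MapsTo (g • ·) T T := fun g x ⟨hxS, hx⟩ => by
    refine ⟨hΓS g hxS, fun n hn => ?_⟩
    have hconj : g⁻¹ * n * g ∈ N := by simpa using ‹N.Normal›.conj_mem n hn g⁻¹
    show n • g • x = g • x
    rw [smul_smul, show n * g = g * (g⁻¹ * n * g) by group, mul_smul,
      show (g⁻¹ * n * g) • x = x from hx _ hconj]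
  -- on `T` the commutators of `H` act trivially, so `H` acts through an abelian group
  have hcomm : ∀ g h : H, ∀ x ∈ T, (g : Γ) • (h : Γ) • x = (h : Γ) • (g : Γ) • x := by
    intro g h x ⟨_, hx⟩
    have hgh : ⁅(g : Γ)⁻¹, (h : Γ)⁻¹⁆ ∈ N :=
      hHN (Subgroup.commutator_mem_commutator (inv_mem g.2) (inv_mem h.2))
    rw [smul_smul, smul_smul, show (g : Γ) * h = h * g * ⁅(g : Γ)⁻¹, (h : Γ)⁻¹⁆ by group,
      mul_smul, show ⁅(g : Γ)⁻¹, (h : Γ)⁻¹⁆ • x = x from hx _ hgh]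
  obtain ⟨x, hxT, hx⟩ :=
    exists_commonFixedPoint_of_commute (F := fun (h : H) (x : X) => (h : Γ) • x)
      (fun h => (hΓ h).mono hTS) (fun h => hΓT h) (fun h => (hΓc h).mono hTS) hcomm
      (convex_commonFixedPoints (fun g _ => hΓ g) hS)
      (isCompact_commonFixedPoints (fun g _ => hΓc g) hSc) hN
  exact ⟨x, hxT.1, fun h hh => hx ⟨h, hh⟩⟩

theorem exists_fixedPoint_of_isSolvable [Group.IsSolvable Γ] (hΓ : ∀ g : Γ, AffineOn (g • ·) S)
    (hΓS : ∀ g : Γ, MapsTo (g • ·) S S) (hΓc : ∀ g : Γ, ContinuousOn (g • ·) S)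
    (hS : Convex ℝ S) (hSc : IsCompact S) (hSne : S.Nonempty) : ∃ x ∈ S, ∀ g : Γ, g • x = x := by
  have hdown : ∀ m k, derivedSeries Γ (k + m) = ⊥ →
      (commonFixedPoints (fun (g : Γ) (x : X) => g • x) (derivedSeries Γ k) S).Nonempty := by
    intro m
    induction m with
    | zero =>
      intro k hk
      obtain ⟨x, hx⟩ := hSne
      exact ⟨x, hx, fun g hg => by simp_all⟩
    | succ m ih =>
      intro k hk
      exact commonFixedPoints_nonempty_of_commutator_le hΓ hΓS hΓc hS hSc
        (derivedSeries_succ Γ k).ge (ih (k + 1) (by rwa [add_right_comm, add_assoc]))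
  obtain ⟨n, hn⟩ := Group.IsSolvable.solvable (G := Γ)
  obtain ⟨x, hxS, hx⟩ := hdown n 0 (by rwa [zero_add])
  exact ⟨x, hxS, fun g => hx g (by simp)⟩

end Solvable

section ExtendById

variable {X : Type*} {K : Set X}

open Classical in
noncomputable def extendById (f : K → K) (x : X) : X :=
  if hx : x ∈ K then f ⟨x, hx⟩ else x

lemma extendById_coe (f : K → K) (x : K) : extendById f x = f x :=
  dif_pos x.2

lemma extendById_of_notMem (f : K → K) {x : X} (hx : x ∉ K) : extendById f x = x :=
  dif_neg hx

lemma extendById_comp (f g : K → K) : extendById (f ∘ g) = extendById f ∘ extendById g := by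
  funext x
  by_cases hx : x ∈ K
  · simp only [Function.comp_apply, extendById_coe _ ⟨x, hx⟩, extendById_coe]
  · simp only [Function.comp_apply, extendById_of_notMem _ hx]

variable (K) in
noncomputable def extendByIdHom : Function.End K →* Function.End X where
  toFun := extendById
  map_one' := by
    funext x
    by_cases hx : x ∈ K
    · exact extendById_coe id ⟨x, hx⟩
    · exact extendById_of_notMem id hx
  map_mul' := extendById_comp

lemma mapsTo_extendById (f : K → K) : MapsTo (extendById f) K K := fun x hx => by
  simpa only [extendById_coe f ⟨x, hx⟩] using (f ⟨x, hx⟩).2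

lemma continuousOn_extendById [TopologicalSpace X] {f : K → K} (hf : Continuous f) :
    ContinuousOn (extendById f) K := by
  refine continuousOn_iff_continuous_domRestrict.mpr ?_
  convert continuous_subtype_val.comp hf using 1
  funext x
  exact extendById_coe f x

lemma affineOn_extendById [AddCommGroup X] [Module ℝ X] (hK : Convex ℝ K) {f : K → K}
    (hf : AffOn K f) : AffineOn (extendById f) K := by
  intro x hx y hy t ht₀ ht₁
  have hmem : t • x + (1 - t) • y ∈ K := hK hx hy ht₀ (by linarith) (by ring)
  rw [extendById_coe f ⟨_, hmem⟩, hf ⟨x, hx⟩ ⟨y, hy⟩ t ht₀ ht₁ hmem,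
    extendById_coe f ⟨x, hx⟩, extendById_coe f ⟨y, hy⟩]

end ExtendById

theorem stmt9_general {X : Type*} [AddCommGroup X] [Module ℝ X] [TopologicalSpace X]
    [IsTopologicalAddGroup X] [ContinuousSMul ℝ X] [T2Space X]
    (K : Set X) (hne : K.Nonempty) (hconv : Convex ℝ K) (hcomp : IsCompact K)
    (Γ : Type*) [Group Γ] [Group.IsSolvable Γ]
    (ρ : Γ →* Function.End K)
    (hρ : ∀ g : Γ, Continuous (ρ g : K → K) ∧ AffOn K (ρ g : K → K)) :
    ∃ p : K, ∀ g : Γ, (ρ g : K → K) p = p := by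
  let _ : MulAction Γ X := MulAction.compHom X ((extendByIdHom K).comp ρ)
  obtain ⟨x, hxK, hx⟩ := exists_fixedPoint_of_isSolvable (Γ := Γ)
    (fun g => affineOn_extendById hconv (hρ g).2) (fun g => mapsTo_extendById (ρ g))
    (fun g => continuousOn_extendById (hρ g).1) hconv hcomp hne
  exact ⟨⟨x, hxK⟩, fun g => Subtype.ext ((extendById_coe (ρ g) ⟨x, hxK⟩).symm.trans (hx g))⟩

theorem stmt9 {X : Type*} [AddCommGroup X] [Module ℝ X] [TopologicalSpace X]
    [IsTopologicalAddGroup X] [ContinuousSMul ℝ X] [T2Space X] [LocallyConvexSpace ℝ X]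
    (K : Set X) (hne : K.Nonempty) (hconv : Convex ℝ K) (hcomp : IsCompact K)
    (Γ : Type*) [Group Γ] [Group.IsSolvable Γ]
    (ρ : Γ →* Function.End K)
    (hρ : ∀ g : Γ, Continuous (ρ g : K → K) ∧ AffOn K (ρ g : K → K)) :
    ∃ p : K, ∀ g : Γ, (ρ g : K → K) p = p :=
  stmt9_general K hne hconv hcomp Γ ρ hρ
end

section
/- (Invariant Hahn–Banach, abelian case) Let X be a real normed space, Y ⊆ X a subspace, g ∈ Y*, and F an abelian semigroup of bounded linear operators on X with T(Y) ⊆ Y, ‖T‖ ≤ 1, and g(T y) = g(y) for all y ∈ Y, T ∈ F. Then g extends to Λ ∈ X* with ‖Λ‖ = ‖g‖ and Λ ∘ T = Λ for all T ∈ F. -/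
/-!
Let `𝒜` be the convex hull of `F ∪ {1}`: it is again a commuting semigroup of contractions
fixing `g`. Hence `q x = inf_{A ∈ 𝒜} ‖A x‖` is a seminorm with `q ≤ ‖·‖` and `g ≤ ‖g‖ q` on `Y`,
and the Hahn–Banach extension `Λ` of `g` dominated by `‖g‖ q` has norm `‖g‖`. It is
`F`-invariant because the Cesàro means `n⁻¹ ∑_{k<n} T^k ∈ 𝒜` give `q (x - T x) ≤ 2‖x‖ / n`.
-/

open Finset Filter

theorem mul_mem_insert_one {M : Type*} [MulOneClass M] {s : Set M}
    (hs : ∀ a ∈ s, ∀ b ∈ s, a * b ∈ s) :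
    ∀ a ∈ insert 1 s, ∀ b ∈ insert 1 s, a * b ∈ insert 1 s := by
  rintro a (rfl | ha) b (rfl | hb) <;> simp [*]

theorem commute_of_mem_insert_one {M : Type*} [MulOneClass M] {s : Set M}
    (hs : ∀ a ∈ s, ∀ b ∈ s, Commute a b) : ∀ a ∈ insert 1 s, ∀ b ∈ insert 1 s, Commute a b := by
  rintro a (rfl | ha) b (rfl | hb) <;> simp [*]

theorem pow_mem_of_one_mem_of_mul_mem {M : Type*} [Monoid M] {t : Set M} (h1 : 1 ∈ t)
    (hmul : ∀ a ∈ t, ∀ b ∈ t, a * b ∈ t) {a : M} (ha : a ∈ t) (n : ℕ) : a ^ n ∈ t := by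
  induction n with
  | zero => simpa using h1
  | succ n ih => simpa [pow_succ] using hmul _ ih _ ha

section ConvexHull

theorem convexHull_induction₂ {𝕜 E : Type*} [Semiring 𝕜] [PartialOrder 𝕜] [AddCommMonoid E]
    [Module 𝕜 E] {s : Set E} {P : E → E → Prop} (hs : ∀ a ∈ s, ∀ b ∈ s, P a b)
    (hleft : ∀ b, Convex 𝕜 {a | P a b}) (hright : ∀ a, Convex 𝕜 {b | P a b}) {a b : E}
    (ha : a ∈ convexHull 𝕜 s) (hb : b ∈ convexHull 𝕜 s) : P a b := by
  have hleft' : ∀ b ∈ s, P a b := fun b hb ↦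
    convexHull_min (fun a ha ↦ hs a ha b hb) (hleft b) ha
  exact convexHull_min hleft' (hright a) hb

variable {𝕜 R : Type*} [CommSemiring 𝕜] [PartialOrder 𝕜] [Semiring R] [Algebra 𝕜 R]
  {s : Set R}

theorem convexHull_mul_mem (hs : ∀ a ∈ s, ∀ b ∈ s, a * b ∈ s) {a b : R}
    (ha : a ∈ convexHull 𝕜 s) (hb : b ∈ convexHull 𝕜 s) : a * b ∈ convexHull 𝕜 s :=
  convexHull_induction₂ (P := fun a b ↦ a * b ∈ convexHull 𝕜 s)
    (fun a ha b hb ↦ subset_convexHull 𝕜 s (hs a ha b hb))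
    (fun b ↦ (convex_convexHull 𝕜 s).linear_preimage (LinearMap.mulRight 𝕜 b))
    (fun a ↦ (convex_convexHull 𝕜 s).linear_preimage (LinearMap.mulLeft 𝕜 a)) ha hb

theorem convexHull_commute (hs : ∀ a ∈ s, ∀ b ∈ s, Commute a b) {a b : R}
    (ha : a ∈ convexHull 𝕜 s) (hb : b ∈ convexHull 𝕜 s) : Commute a b :=
  convexHull_induction₂ hs
    (fun _ _ hx _ hy u v _ _ _ ↦ (hx.smul_left u).add_left (hy.smul_left v))
    (fun _ _ hx _ hy u v _ _ _ ↦ (hx.smul_right u).add_right (hy.smul_right v)) ha hb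

theorem Convex.smul_geom_sum_mem {𝕜 R : Type*} [Field 𝕜] [LinearOrder 𝕜] [IsStrictOrderedRing 𝕜]
    [Ring R] [Algebra 𝕜 R] {t : Set R} (ht : Convex 𝕜 t) (h1 : 1 ∈ t)
    (hmul : ∀ a ∈ t, ∀ b ∈ t, a * b ∈ t) {a : R} (ha : a ∈ t) {n : ℕ} (hn : n ≠ 0) :
    (n : 𝕜)⁻¹ • ∑ k ∈ range n, a ^ k ∈ t := by
  rw [smul_sum]
  refine ht.sum_mem (fun _ _ ↦ by positivity) ?_ fun k _ ↦
    pow_mem_of_one_mem_of_mul_mem h1 hmul ha k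
  simp [hn]

end ConvexHull

section InfNormApply

variable {E : Type*} [SeminormedAddCommGroup E] [NormedSpace ℝ E] {𝒜 : Set (E →L[ℝ] E)}

noncomputable def infNormApply (𝒜 : Set (E →L[ℝ] E)) (x : E) : ℝ :=
  ⨅ A : 𝒜, ‖(A : E →L[ℝ] E) x‖

theorem infNormApply_le {A : E →L[ℝ] E} (hA : A ∈ 𝒜) (x : E) : infNormApply 𝒜 x ≤ ‖A x‖ :=
  ciInf_le ⟨0, by rintro _ ⟨B, rfl⟩; exact norm_nonneg _⟩ (⟨A, hA⟩ : 𝒜)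

theorem le_mul_infNormApply (hne : 𝒜.Nonempty) {r c : ℝ} (hr : 0 ≤ r) {x : E}
    (h : ∀ A ∈ 𝒜, c ≤ r * ‖A x‖) : c ≤ r * infNormApply 𝒜 x := by
  have := hne.to_subtype
  rw [infNormApply, Real.mul_iInf_of_nonneg hr]
  exact le_ciInf fun A ↦ h A A.2

theorem infNormApply_smul (c : ℝ) (x : E) : infNormApply 𝒜 (c • x) = ‖c‖ * infNormApply 𝒜 x := by
  simp only [infNormApply, map_smul, norm_smul, Real.mul_iInf_of_nonneg (norm_nonneg c)]

theorem infNormApply_add_le (hmul : ∀ A ∈ 𝒜, ∀ B ∈ 𝒜, A * B ∈ 𝒜)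
    (hcomm : ∀ A ∈ 𝒜, ∀ B ∈ 𝒜, Commute A B) (hnorm : ∀ A ∈ 𝒜, ‖A‖ ≤ 1) (x y : E) :
    infNormApply 𝒜 (x + y) ≤ infNormApply 𝒜 x + infNormApply 𝒜 y := by
  rcases isEmpty_or_nonempty 𝒜 with h𝒜 | h𝒜
  · simp [infNormApply]
  have hcontr (A : E →L[ℝ] E) (hA : A ∈ 𝒜) (z : E) : ‖A z‖ ≤ ‖z‖ :=
    (A.le_of_opNorm_le (hnorm A hA) z).trans_eq (one_mul _)
  refine le_ciInf_add_ciInf fun ⟨A, hA⟩ ⟨B, hB⟩ ↦ ?_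
  -- by commutativity, `A * B` acts on `x` through `A` and on `y` through `B`
  have hAB : (A * B) (x + y) = B (A x) + A (B y) := by
    rw [map_add, show (A * B) x = B (A x) from congrArg (· x) (hcomm A hA B hB).eq]
    rfl
  calc infNormApply 𝒜 (x + y) ≤ ‖(A * B) (x + y)‖ := infNormApply_le (hmul A hA B hB) _
    _ ≤ ‖B (A x)‖ + ‖A (B y)‖ := hAB ▸ norm_add_le _ _
    _ ≤ ‖A x‖ + ‖B y‖ := add_le_add (hcontr B hB _) (hcontr A hA _)

noncomputable def infNormSeminorm (𝒜 : Set (E →L[ℝ] E)) (hmul : ∀ A ∈ 𝒜, ∀ B ∈ 𝒜, A * B ∈ 𝒜)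
    (hcomm : ∀ A ∈ 𝒜, ∀ B ∈ 𝒜, Commute A B) (hnorm : ∀ A ∈ 𝒜, ‖A‖ ≤ 1) : Seminorm ℝ E :=
  Seminorm.of (infNormApply 𝒜) (infNormApply_add_le hmul hcomm hnorm) infNormApply_smul

theorem infNormApply_sub_apply_self_le (h1 : 1 ∈ 𝒜) (hconv : Convex ℝ 𝒜)
    (hmul : ∀ A ∈ 𝒜, ∀ B ∈ 𝒜, A * B ∈ 𝒜) (hnorm : ∀ A ∈ 𝒜, ‖A‖ ≤ 1) {T : E →L[ℝ] E}
    (hT : T ∈ 𝒜) (x : E) {n : ℕ} (hn : n ≠ 0) : infNormApply 𝒜 (x - T x) ≤ 2 * ‖x‖ / n := by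
  set A := (n : ℝ)⁻¹ • ∑ k ∈ range n, T ^ k
  have hA : A ∈ 𝒜 := hconv.smul_geom_sum_mem h1 hmul hT hn
  have hcontr (B : E →L[ℝ] E) (hB : B ∈ 𝒜) : ‖B x‖ ≤ ‖x‖ :=
    (ContinuousLinearMap.le_of_opNorm_le _ (hnorm B hB) x).trans_eq (one_mul _)
  -- the Cesàro mean telescopes: `A * (1 - T) = n⁻¹ • (1 - T ^ n)`
  have hAx : A (x - T x) = (n : ℝ)⁻¹ • (x - (T ^ n) x) := by
    have := congrArg (· x) (congrArg ((n : ℝ)⁻¹ • ·) (geom_sum_mul_neg T n))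
    simpa [A, smul_mul_assoc] using this
  calc infNormApply 𝒜 (x - T x) ≤ ‖A (x - T x)‖ := infNormApply_le hA _
    _ = (n : ℝ)⁻¹ * ‖x - (T ^ n) x‖ := by rw [hAx, norm_smul, norm_inv, Real.norm_natCast]
    _ ≤ (n : ℝ)⁻¹ * (‖x‖ + ‖x‖) := by
        gcongr
        exact (norm_sub_le _ _).trans <|
          add_le_add_right (hcontr _ (pow_mem_of_one_mem_of_mul_mem h1 hmul hT n)) _
    _ = 2 * ‖x‖ / n := by ring

theorem infNormApply_sub_apply_self (h1 : 1 ∈ 𝒜) (hconv : Convex ℝ 𝒜)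
    (hmul : ∀ A ∈ 𝒜, ∀ B ∈ 𝒜, A * B ∈ 𝒜) (hnorm : ∀ A ∈ 𝒜, ‖A‖ ≤ 1) {T : E →L[ℝ] E}
    (hT : T ∈ 𝒜) (x : E) : infNormApply 𝒜 (x - T x) = 0 :=
  le_antisymm
    (ge_of_tendsto (tendsto_const_div_atTop_nhds_zero_nat (2 * ‖x‖)) <|
      (eventually_ne_atTop 0).mono fun _ hn ↦
        infNormApply_sub_apply_self_le h1 hconv hmul hnorm hT x hn)
    (Real.iInf_nonneg fun _ ↦ norm_nonneg _)

end InfNormApply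

theorem exists_extension_norm_eq_of_le_seminorm {X : Type*} [SeminormedAddCommGroup X]
    [NormedSpace ℝ X] (Y : Subspace ℝ X) (g : Y →L[ℝ] ℝ) (p : Seminorm ℝ X)
    (hp : ∀ x, p x ≤ ‖x‖) (hg : ∀ y : Y, g y ≤ ‖g‖ * p y) :
    ∃ Λ : X →L[ℝ] ℝ, (∀ y : Y, Λ y = g y) ∧ ‖Λ‖ = ‖g‖ ∧ ∀ x, |Λ x| ≤ ‖g‖ * p x := by
  obtain ⟨Λ, hext, hle⟩ :=
    Module.Dual.exists_extension_of_le_seminorm_real Y g.toLinearMap (p := ‖g‖₊ • p) hg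
  have hbound (x : X) : ‖Λ x‖ ≤ ‖g‖ * ‖x‖ :=
    (hle x).trans (mul_le_mul_of_nonneg_left (hp x) (norm_nonneg g))
  refine ⟨Λ.mkContinuous ‖g‖ hbound, hext, le_antisymm (Λ.mkContinuous_norm_le (norm_nonneg g) _)
    (g.opNorm_le_bound (norm_nonneg _) fun y ↦ ?_), hle⟩
  have := (Λ.mkContinuous ‖g‖ hbound).le_opNorm y
  rwa [LinearMap.mkContinuous_apply, hext] at this

section Invariance

variable {X : Type*} [SeminormedAddCommGroup X] [NormedSpace ℝ X]

theorem convex_setOf_forall_apply_sub_mem (Y K : Submodule ℝ X) :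
    Convex ℝ {A : X →L[ℝ] X | ∀ y ∈ Y, A y - y ∈ K} := by
  intro A hA B hB a b _ _ hab y hy
  have : (a • A + b • B) y - y = a • (A y - y) + b • (B y - y) := by
    simp only [add_apply, smul_apply]
    linear_combination (norm := module) hab • y
  rw [this]
  exact K.add_mem (K.smul_mem a (hA y hy)) (K.smul_mem b (hB y hy))

theorem le_norm_mul_norm_apply_of_sub_mem {Y : Subspace ℝ X} (g : Y →L[ℝ] ℝ) {A : X →L[ℝ] X}
    (hA : ∀ y ∈ Y, A y - y ∈ (LinearMap.ker (g : Y →ₗ[ℝ] ℝ)).map Y.subtype) (y : Y) :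
    g y ≤ ‖g‖ * ‖A y‖ := by
  obtain ⟨z, hz, hAy⟩ := hA y y.2
  have hgz : g z = 0 := hz
  have hAy' : A y = ((y + z : Y) : X) := by
    rw [Submodule.coe_add, show (z : X) = A y - y from hAy]
    abel
  calc g y = g (y + z) := by rw [map_add, hgz, add_zero]
    _ ≤ ‖g (y + z)‖ := le_abs_self _
    _ ≤ ‖g‖ * ‖A y‖ := hAy' ▸ g.le_opNorm _

theorem sub_mem_map_ker_of_invariant {Y : Subspace ℝ X} (g : Y →L[ℝ] ℝ) {T : X →L[ℝ] X}
    (hTY : ∀ y ∈ Y, T y ∈ Y) (hTg : ∀ y : Y, ∀ hy : T y ∈ Y, g ⟨T y, hy⟩ = g y) :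
    ∀ y ∈ Y, T y - y ∈ (LinearMap.ker (g : Y →ₗ[ℝ] ℝ)).map Y.subtype := fun y hy ↦
  ⟨⟨T y, hTY y hy⟩ - ⟨y, hy⟩, by simp [hTg ⟨y, hy⟩], rfl⟩

end Invariance

theorem stmt11 {X : Type*} [NormedAddCommGroup X] [NormedSpace ℝ X]
    (Y : Subspace ℝ X) (g : Y →L[ℝ] ℝ)
    (F : Set (X →L[ℝ] X))
    (hclosed : ∀ T ∈ F, ∀ S ∈ F, T.comp S ∈ F)
    (habel : ∀ T ∈ F, ∀ S ∈ F, T.comp S = S.comp T)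
    (hY : ∀ T ∈ F, ∀ y ∈ Y, T y ∈ Y)
    (hnorm : ∀ T ∈ F, ‖T‖ ≤ 1)
    (hinv : ∀ T ∈ F, ∀ y : Y, ∀ hy : T y ∈ Y, g ⟨T y, hy⟩ = g y) :
    ∃ Λ : X →L[ℝ] ℝ, (∀ y : Y, Λ y = g y) ∧ ‖Λ‖ = ‖g‖ ∧
      ∀ T ∈ F, Λ.comp T = Λ := by
  set 𝒜 := convexHull ℝ (insert 1 F)
  have h1 : (1 : X →L[ℝ] X) ∈ 𝒜 := subset_convexHull ℝ _ (Set.mem_insert _ _)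
  have hF : F ⊆ 𝒜 := (Set.subset_insert _ _).trans (subset_convexHull ℝ _)
  have hmul : ∀ A ∈ 𝒜, ∀ B ∈ 𝒜, A * B ∈ 𝒜 := fun A hA B hB ↦
    convexHull_mul_mem (mul_mem_insert_one hclosed) hA hB
  have hcomm : ∀ A ∈ 𝒜, ∀ B ∈ 𝒜, Commute A B := fun A hA B hB ↦
    convexHull_commute (commute_of_mem_insert_one habel) hA hB
  have hnorm𝒜 : ∀ A ∈ 𝒜, ‖A‖ ≤ 1 := fun A hA ↦ mem_closedBall_zero_iff.mp <|
    convexHull_min (Set.insert_subset (mem_closedBall_zero_iff.mpr ContinuousLinearMap.norm_id_le)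
      fun T hT ↦ mem_closedBall_zero_iff.mpr (hnorm T hT)) (convex_closedBall 0 1) hA
  have hfix : ∀ A ∈ 𝒜, ∀ y ∈ Y, A y - y ∈ (LinearMap.ker (g : Y →ₗ[ℝ] ℝ)).map Y.subtype :=
    fun A hA ↦ convexHull_min (Set.insert_subset (fun y _ ↦ by simp)
      fun T hT ↦ sub_mem_map_ker_of_invariant g (hY T hT) (hinv T hT))
      (convex_setOf_forall_apply_sub_mem _ _) hA
  obtain ⟨Λ, hext, hΛ, hΛq⟩ := exists_extension_norm_eq_of_le_seminorm Y g
    (infNormSeminorm 𝒜 hmul hcomm hnorm𝒜) (infNormApply_le h1) fun y ↦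
      le_mul_infNormApply ⟨1, h1⟩ (norm_nonneg g) fun A hA ↦
        le_norm_mul_norm_apply_of_sub_mem g (hfix A hA) y
  refine ⟨Λ, hext, hΛ, fun T hT ↦ ContinuousLinearMap.ext fun x ↦ ?_⟩
  have h0 : |Λ (x - T x)| ≤ ‖g‖ * infNormApply 𝒜 (x - T x) := hΛq (x - T x)
  rwa [infNormApply_sub_apply_self h1 (convex_convexHull ℝ _) hmul hnorm𝒜 (hF hT), mul_zero,
    abs_nonpos_iff, map_sub, sub_eq_zero, eq_comm] at h0
end

section
/- Let K be a nonempty convex compact subset of a Hausdorff locally convex topological vector space and f : K → K a continuous affine map. Then f has a fixed point in K, and moreover any weak cluster-style point p with p ∈ ⋂ₙ Aₙ(K), where Aₙ = (1/n)(I + f + … + f^{n−1}), is a fixed point of f. -/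
open Finset Filter Topology Bornology

section Algebraic

variable {X : Type*} [AddCommGroup X] [Module ℝ X]

theorem inv_smul_sum_range_succ (x : ℕ → X) {n : ℕ} (hn : 0 < n) :
    ((n + 1 : ℕ) : ℝ)⁻¹ • ∑ k ∈ range (n + 1), x k =
      ((n : ℝ) / (n + 1)) • ((n : ℝ)⁻¹ • ∑ k ∈ range n, x k) + (1 - (n : ℝ) / (n + 1)) • x n := by
  rw [sum_range_succ, smul_smul]
  match_scalars
  · field_simp
  · field_simp
    ring

theorem Convex.inv_smul_sum_range_mem {K : Set X} (hK : Convex ℝ K) {x : ℕ → X}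
    (hx : ∀ k, x k ∈ K) {n : ℕ} (hn : 0 < n) : (n : ℝ)⁻¹ • ∑ k ∈ range n, x k ∈ K := by
  rw [smul_sum]
  refine hK.sum_mem (fun _ _ ↦ by positivity) ?_ fun k _ ↦ hx k
  rw [sum_const, card_range, nsmul_eq_mul]
  field_simp

variable {K : Set X} {f : K → K}

theorem AffOn.apply_eq (haff : AffOn K f) {x y z : K} {t : ℝ} (ht₀ : 0 ≤ t) (ht₁ : t ≤ 1)
    (hz : (z : X) = t • (x : X) + (1 - t) • (y : X)) :
    (f z : X) = t • (f x : X) + (1 - t) • (f y : X) := by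
  obtain ⟨z, hzK⟩ := z
  subst hz
  exact haff x y t ht₀ ht₁ hzK

theorem AffOn.apply_inv_smul_sum_range (hK : Convex ℝ K) (haff : AffOn K f) (x : ℕ → K)
    {n : ℕ} (hn : 0 < n) {p : K} (hp : (p : X) = (n : ℝ)⁻¹ • ∑ k ∈ range n, (x k : X)) :
    (f p : X) = (n : ℝ)⁻¹ • ∑ k ∈ range n, (f (x k) : X) := by
  induction n, hn using Nat.le_induction generalizing p with
  | base =>
    obtain rfl : p = x 0 := Subtype.ext (by simpa using hp)
    simp
  | succ n hn ih =>
    set a : K := ⟨_, hK.inv_smul_sum_range_mem (fun k ↦ (x k).2) hn⟩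
    have ht₀ : 0 ≤ (n : ℝ) / (n + 1) := by positivity
    have ht₁ : (n : ℝ) / (n + 1) ≤ 1 := div_le_one_of_le₀ (by linarith) (by positivity)
    rw [haff.apply_eq (x := a) (y := x n) ht₀ ht₁ (by rw [hp, inv_smul_sum_range_succ _ hn]),
      ih (p := a) rfl, inv_smul_sum_range_succ _ hn]

theorem AffOn.apply_sub_eq_of_eq_birkhoffAverage (hK : Convex ℝ K) (haff : AffOn K f)
    {n : ℕ} (hn : 0 < n) {p q : K} (hp : (p : X) = birkhoffAverage ℝ f (↑) n q) :
    (f p : X) - p = (n : ℝ)⁻¹ • ((f^[n] q : X) - q) := by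
  have hfp : (f p : X) = birkhoffAverage ℝ f (↑) n (f q) := by
    rw [haff.apply_inv_smul_sum_range hK (fun k ↦ f^[k] q) hn hp]
    simp only [birkhoffAverage, birkhoffSum, ← Function.iterate_succ_apply' f,
      Function.iterate_succ_apply]
  rw [hfp, hp, birkhoffAverage_apply_sub_birkhoffAverage]

end Algebraic

section Topological

variable {X : Type*} [AddCommGroup X] [Module ℝ X] [TopologicalSpace X] [IsTopologicalAddGroup X]

theorem Bornology.IsVonNBounded.tendsto_inv_smul_sub
    {K : Set X} (hK : IsVonNBounded ℝ K) {x y : ℕ → X} (hx : ∀ n, x n ∈ K) (hy : ∀ n, y n ∈ K) :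
    Tendsto (fun n : ℕ ↦ (n : ℝ)⁻¹ • (x n - y n)) atTop (𝓝 0) :=
  (hK.sub hK).smul_tendsto_zero (.of_forall fun n ↦ Set.sub_mem_sub (hx n) (hy n))
    tendsto_inv_atTop_nhds_zero_nat

variable [T2Space X] {K : Set X} {f : K → K}

theorem AffOn.apply_eq_self_of_forall_eq_birkhoffAverage (hK : Convex ℝ K)
    (hKb : IsVonNBounded ℝ K) (haff : AffOn K f) {p : K}
    (hp : ∀ n, 0 < n → ∃ q : K, (p : X) = birkhoffAverage ℝ f (↑) n q) : f p = p := by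
  have : Nonempty K := ⟨p⟩
  choose! q hq using hp
  have hdisp : Tendsto (fun _ : ℕ ↦ (f p : X) - p) atTop (𝓝 0) :=
    (hKb.tendsto_inv_smul_sub (fun n ↦ (f^[n] (q n)).2) (fun n ↦ (q n).2)).congr'
      ((eventually_gt_atTop 0).mono fun n hn ↦
        (haff.apply_sub_eq_of_eq_birkhoffAverage hK hn (hq n hn)).symm)
  exact Subtype.ext (sub_eq_zero.mp (tendsto_const_nhds_iff.mp hdisp))

theorem AffOn.exists_apply_eq_self [ContinuousSMul ℝ X] (hne : K.Nonempty) (hK : Convex ℝ K)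
    (hcomp : IsCompact K) (hf : Continuous f) (haff : AffOn K f) : ∃ p, f p = p := by
  obtain ⟨x, hx⟩ := hne
  have := isCompact_iff_compactSpace.mp hcomp
  let u : ℕ → K := fun n ↦ ⟨birkhoffAverage ℝ f (↑) (n + 1) ⟨x, hx⟩,
    hK.inv_smul_sum_range_mem (fun k ↦ (f^[k] ⟨x, hx⟩).2) n.succ_pos⟩
  have hdisp : Tendsto (fun n ↦ (f (u n) : X) - u n) atTop (𝓝 0) := by
    refine ((hcomp.isVonNBounded ℝ).tendsto_inv_smul_sub (fun n ↦ (f^[n] ⟨x, hx⟩).2)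
      (fun _ ↦ hx)).comp (tendsto_add_atTop_nat 1) |>.congr fun n ↦ ?_
    exact (haff.apply_sub_eq_of_eq_birkhoffAverage hK n.succ_pos rfl).symm
  obtain ⟨p, hp⟩ : (0 : X) ∈ Set.range fun y : K ↦ (f y : X) - y :=
    (isCompact_range (by fun_prop)).isClosed.mem_of_tendsto hdisp (.of_forall fun n ↦ ⟨u n, rfl⟩)
  exact ⟨p, Subtype.ext (sub_eq_zero.mp hp)⟩

end Topological

theorem stmt16_general {X : Type*} [AddCommGroup X] [Module ℝ X] [TopologicalSpace X]
    [IsTopologicalAddGroup X] [ContinuousSMul ℝ X] [T2Space X]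
    (K : Set X) (hne : K.Nonempty) (hconv : Convex ℝ K) (hcomp : IsCompact K)
    (f : K → K) (hf : Continuous f) (haff : AffOn K f) :
    (∃ p : K, f p = p) ∧
    (∀ p : K, (∀ n : ℕ, 1 ≤ n → ∃ q : K,
        (p : X) = (1 / (n : ℝ)) • ∑ k ∈ Finset.range n, (f^[k] q : X)) →
      f p = p) := by
  refine ⟨haff.exists_apply_eq_self hne hconv hcomp hf, fun p hp ↦ ?_⟩
  refine haff.apply_eq_self_of_forall_eq_birkhoffAverage hconv (hcomp.isVonNBounded ℝ) fun n hn ↦ ?_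
  obtain ⟨q, hq⟩ := hp n hn
  exact ⟨q, by rw [hq, one_div]; rfl⟩

theorem stmt16 {X : Type*} [AddCommGroup X] [Module ℝ X] [TopologicalSpace X]
    [IsTopologicalAddGroup X] [ContinuousSMul ℝ X] [T2Space X] [LocallyConvexSpace ℝ X]
    (K : Set X) (hne : K.Nonempty) (hconv : Convex ℝ K) (hcomp : IsCompact K)
    (f : K → K) (hf : Continuous f) (haff : AffOn K f) :
    (∃ p : K, f p = p) ∧
    (∀ p : K, (∀ n : ℕ, 1 ≤ n → ∃ q : K,
        (p : X) = (1 / (n : ℝ)) • ∑ k ∈ Finset.range n, (f^[k] q : X)) →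
      f p = p) :=
  stmt16_general K hne hconv hcomp f hf haff
end

section
/- Let X be a real normed space and let T, S be commuting linear isometries of X onto itself such that additionally a subspace Y is invariant under T and S and a functional g ∈ Y* satisfies g ∘ T|_Y = g and g ∘ S|_Y = g. Then there is a norm-preserving extension Λ ∈ X* of g invariant under both T and S: Λ ∘ T = Λ = Λ ∘ S. -/
set_option maxHeartbeats 1000000 in
set_option synthInstance.maxHeartbeats 400000 in
open Finset Pointwise in
theorem stmt19 {X : Type*} [NormedAddCommGroup X] [NormedSpace ℝ X]
    (Y : Subspace ℝ X) (g : Y →L[ℝ] ℝ)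
    (T S : X →L[ℝ] X)
    (hTnorm : ‖T‖ ≤ 1) (hSnorm : ‖S‖ ≤ 1)
    (hcomm : T.comp S = S.comp T)
    (hTY : ∀ y ∈ Y, T y ∈ Y) (hSY : ∀ y ∈ Y, S y ∈ Y)
    (hTinv : ∀ y : Y, ∀ hy : T y ∈ Y, g ⟨T y, hy⟩ = g y)
    (hSinv : ∀ y : Y, ∀ hy : S y ∈ Y, g ⟨S y, hy⟩ = g y) :
    ∃ Λ : X →L[ℝ] ℝ, (∀ y : Y, Λ y = g y) ∧ ‖Λ‖ = ‖g‖ ∧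
      Λ.comp T = Λ ∧ Λ.comp S = Λ := by
  classical
  -- Cesàro averages
  set A : (X →L[ℝ] X) → ℕ → (X →L[ℝ] X) :=
    fun U n => ((n : ℝ))⁻¹ • ∑ i ∈ range n, U ^ i with hA
  have hCommTS : Commute T S := hcomm
  -- commuting of averages
  have hAcomm : ∀ U V : X →L[ℝ] X, Commute U V → ∀ n m, Commute (A U n) (A V m) := by
    intro U V h n m
    have hs : Commute (∑ i ∈ range n, U ^ i) (∑ j ∈ range m, V ^ j) := by
      apply Commute.sum_left
      intro i _
      apply Commute.sum_right
      intro j _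
      exact (h.pow_pow i j)
    show (A U n) * (A V m) = (A V m) * (A U n)
    rw [hA]
    simp only [smul_mul_assoc, mul_smul_comm]
    rw [hs.eq, smul_comm]
  -- norm bound for averages
  have hAnorm : ∀ U : X →L[ℝ] X, ‖U‖ ≤ 1 → ∀ n, ‖A U n‖ ≤ 1 := by
    intro U hU n
    rcases Nat.eq_zero_or_pos n with rfl | hn
    · simp [hA]
    have h1 : ‖∑ i ∈ range n, U ^ i‖ ≤ (n : ℝ) := by
      calc ‖∑ i ∈ range n, U ^ i‖ ≤ ∑ i ∈ range n, ‖U ^ i‖ := norm_sum_le _ _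
        _ ≤ ∑ _i ∈ range n, 1 := by
            apply Finset.sum_le_sum
            intro i _
            rcases Nat.eq_zero_or_pos i with rfl | hi
            · simpa [ContinuousLinearMap.one_def] using ContinuousLinearMap.norm_id_le
            · exact le_trans (norm_pow_le' U hi) (pow_le_one₀ (norm_nonneg U) hU)
        _ = (n : ℝ) := by simp
    have hn' : (0:ℝ) < n := by exact_mod_cast hn
    have he : ‖A U n‖ = ((n:ℝ))⁻¹ * ‖∑ i ∈ range n, U ^ i‖ := by
      calc ‖A U n‖ = ‖((n:ℝ))⁻¹‖ * ‖∑ i ∈ range n, U ^ i‖ :=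
            norm_smul ((n:ℝ))⁻¹ (∑ i ∈ range n, U ^ i)
        _ = ((n:ℝ))⁻¹ * ‖∑ i ∈ range n, U ^ i‖ := by
            rw [Real.norm_eq_abs, abs_of_nonneg (by positivity)]
    calc ‖A U n‖ ≤ ((n:ℝ))⁻¹ * (n : ℝ) := by
          rw [he]
          exact mul_le_mul_of_nonneg_left h1 (inv_nonneg.2 (Nat.cast_nonneg n))
      _ = 1 := inv_mul_cancel₀ (ne_of_gt hn')
  -- the monoid of averaging operators
  set gens : Set (X →L[ℝ] X) :=
    (Set.range fun n => A T (n+1)) ∪ (Set.range fun n => A S (n+1)) with hgens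
  set M : Submonoid (X →L[ℝ] X) := Submonoid.closure gens with hM
  have hATmem : ∀ n, A T (n+1) ∈ M := fun n => Submonoid.subset_closure (Or.inl ⟨n, rfl⟩)
  have hASmem : ∀ n, A S (n+1) ∈ M := fun n => Submonoid.subset_closure (Or.inr ⟨n, rfl⟩)
  -- norm bound on M
  have hMnorm : ∀ P ∈ M, ‖P‖ ≤ 1 := by
    intro P hP
    induction hP using Submonoid.closure_induction with
    | mem x hx =>
        rcases hx with ⟨n, rfl⟩ | ⟨n, rfl⟩
        · exact hAnorm T hTnorm (n+1)
        · exact hAnorm S hSnorm (n+1)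
    | one => simpa [ContinuousLinearMap.one_def] using ContinuousLinearMap.norm_id_le
    | mul x y hx hy ihx ihy =>
        calc ‖x * y‖ ≤ ‖x‖ * ‖y‖ := norm_mul_le x y
          _ ≤ 1 * 1 := mul_le_mul ihx ihy (norm_nonneg y) zero_le_one
          _ = 1 := one_mul 1
  -- generators commute pairwise
  have hgenscomm : ∀ a ∈ gens, ∀ b ∈ gens, Commute a b := by
    rintro a (⟨n, rfl⟩ | ⟨n, rfl⟩) b (⟨m, rfl⟩ | ⟨m, rfl⟩)
    · exact hAcomm T T (Commute.refl T) _ _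
    · exact hAcomm T S hCommTS _ _
    · exact hAcomm S T hCommTS.symm _ _
    · exact hAcomm S S (Commute.refl S) _ _
  -- M is commutative
  have hMcomm : ∀ P ∈ M, ∀ Q ∈ M, Commute P Q := by
    intro P hP
    induction hP using Submonoid.closure_induction with
    | mem x hx =>
        intro Q hQ
        induction hQ using Submonoid.closure_induction with
        | mem y hy => exact hgenscomm x hx y hy
        | one => exact Commute.one_right x
        | mul y z hy hz ihy ihz => exact Commute.mul_right ihy ihz
    | one => intro Q hQ; exact Commute.one_left Q
    | mul x y hx hy ihx ihy => intro Q hQ; exact Commute.mul_left (ihx Q hQ) (ihy Q hQ)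
  -- invariance of g under powers
  have hpow : ∀ U : X →L[ℝ] X, (∀ y ∈ Y, U y ∈ Y) →
      (∀ y : Y, ∀ hy : U y ∈ Y, g ⟨U y, hy⟩ = g y) →
      ∀ i, ∀ y : Y, ∃ h : (U ^ i) (y : X) ∈ Y, g ⟨(U ^ i) (y : X), h⟩ = g y := by
    intro U hUY hUinv i
    induction i with
    | zero => intro y; exact ⟨by simpa using y.2, by simp⟩
    | succ i ih =>
        intro y
        have h1 : U (y : X) ∈ Y := hUY _ y.2
        obtain ⟨h2, h3⟩ := ih ⟨U (y : X), h1⟩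
        have he : (U ^ (i+1)) (y : X) = (U ^ i) (U (y : X)) := by
          rw [pow_succ, ContinuousLinearMap.mul_apply]
        refine ⟨by rw [he]; exact h2, ?_⟩
        have heq : g ⟨(U ^ (i+1)) (y:X), by rw [he]; exact h2⟩
            = g ⟨(U ^ i) (U (y:X)), h2⟩ := congrArg g (Subtype.ext he)
        rw [heq, h3]
        exact hUinv y h1
  -- invariance of g under averages
  have hAinv : ∀ U : X →L[ℝ] X, (∀ y ∈ Y, U y ∈ Y) →
      (∀ y : Y, ∀ hy : U y ∈ Y, g ⟨U y, hy⟩ = g y) →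
      ∀ n, ∀ y : Y, ∃ h : (A U (n+1)) (y : X) ∈ Y, g ⟨(A U (n+1)) (y : X), h⟩ = g y := by
    intro U hUY hUinv n y
    set w : ℕ → Y := fun i => ⟨(U ^ i) (y : X), (hpow U hUY hUinv i y).choose⟩ with hw
    have hwv : ∀ i, g (w i) = g y := fun i => (hpow U hUY hUinv i y).choose_spec
    set z : Y := ((((n:ℕ):ℝ)+1))⁻¹ • ∑ i ∈ range (n+1), w i with hz
    have hcoe : (z : X) = (A U (n+1)) (y : X) := by
      rw [hz, hA]
      push_cast
      simp [hw, ContinuousLinearMap.sum_apply]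
    refine ⟨hcoe ▸ z.2, ?_⟩
    have heq : g ⟨(A U (n+1)) (y : X), hcoe ▸ z.2⟩ = g z := by
      congr 1; exact Subtype.ext hcoe.symm
    rw [heq, hz, map_smul, map_sum]
    simp only [hwv, smul_eq_mul]
    rw [Finset.sum_const, card_range, nsmul_eq_mul]
    push_cast
    rw [← mul_assoc, inv_mul_cancel₀ (by positivity), one_mul]
  have hMinv : ∀ P ∈ M, ∀ y : Y, ∃ h : P (y : X) ∈ Y, g ⟨P (y : X), h⟩ = g y := by
    intro P hP
    induction hP using Submonoid.closure_induction with
    | mem x hx =>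
        rcases hx with ⟨n, rfl⟩ | ⟨n, rfl⟩
        · exact hAinv T hTY hTinv n
        · exact hAinv S hSY hSinv n
    | one => intro y; exact ⟨by simpa using y.2, by simp⟩
    | mul x y hx hy ihx ihy =>
        intro v
        obtain ⟨h1, h2⟩ := ihy v
        obtain ⟨h3, h4⟩ := ihx ⟨y (v : X), h1⟩
        have he : (x * y) (v : X) = x (y (v : X)) := rfl
        refine ⟨he ▸ h3, ?_⟩
        have heq : g ⟨(x * y) (v : X), he ▸ h3⟩ = g ⟨x (y (v:X)), h3⟩ :=
          congrArg g (Subtype.ext he)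
        rw [heq, h4]
        exact h2
  -- the sublinear functional N
  set Nset : X → Set ℝ := fun x => (fun P : X →L[ℝ] X => ‖g‖ * ‖P x‖) '' (M : Set _) with hNset
  have hne : ∀ x, (Nset x).Nonempty := fun x => ⟨‖g‖ * ‖(1 : X →L[ℝ] X) x‖, 1, M.one_mem, rfl⟩
  have hbdd : ∀ x, BddBelow (Nset x) := by
    intro x
    refine ⟨0, ?_⟩
    rintro r ⟨P, hP, rfl⟩
    positivity
  set N : X → ℝ := fun x => sInf (Nset x) with hN
  have hNle : ∀ x, ∀ P ∈ M, N x ≤ ‖g‖ * ‖P x‖ := by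
    intro x P hP
    exact csInf_le (hbdd x) ⟨P, hP, rfl⟩
  have hNx : ∀ x, N x ≤ ‖g‖ * ‖x‖ := by
    intro x
    simpa using hNle x 1 M.one_mem
  have N_hom : ∀ c : ℝ, 0 < c → ∀ x, N (c • x) = c * N x := by
    intro c hc x
    have hset : Nset (c • x) = c • Nset x := by
      ext r
      simp only [hNset, Set.mem_image, Set.mem_smul_set]
      constructor
      · rintro ⟨P, hP, rfl⟩
        refine ⟨‖g‖ * ‖P x‖, ⟨P, hP, rfl⟩, ?_⟩
        rw [map_smul, norm_smul, Real.norm_eq_abs, abs_of_pos hc, smul_eq_mul]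
        ring
      · rintro ⟨r, ⟨P, hP, rfl⟩, rfl⟩
        refine ⟨P, hP, ?_⟩
        rw [map_smul, norm_smul, Real.norm_eq_abs, abs_of_pos hc, smul_eq_mul]
        ring
    rw [hN]
    simp only
    rw [hset, Real.sInf_smul_of_nonneg hc.le, smul_eq_mul]
  have N_add : ∀ x y, N (x + y) ≤ N x + N y := by
    intro x y
    have key : ∀ P ∈ M, ∀ Q ∈ M, N (x + y) ≤ ‖g‖ * ‖P x‖ + ‖g‖ * ‖Q y‖ := by
      intro P hP Q hQ
      have h1 : N (x + y) ≤ ‖g‖ * ‖(Q * P) (x + y)‖ := hNle _ _ (mul_mem hQ hP)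
      have h2 : (Q * P) (x + y) = Q (P x) + P (Q y) := by
        have := hMcomm Q hQ P hP
        rw [map_add]
        congr 1
        rw [← ContinuousLinearMap.mul_apply, this.eq, ContinuousLinearMap.mul_apply]
      have h3 : ‖Q (P x)‖ ≤ ‖P x‖ := by
        calc ‖Q (P x)‖ ≤ ‖Q‖ * ‖P x‖ := Q.le_opNorm _
          _ ≤ 1 * ‖P x‖ := by gcongr; exact hMnorm Q hQ
          _ = ‖P x‖ := one_mul _
      have h4 : ‖P (Q y)‖ ≤ ‖Q y‖ := by
        calc ‖P (Q y)‖ ≤ ‖P‖ * ‖Q y‖ := P.le_opNorm _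
          _ ≤ 1 * ‖Q y‖ := by gcongr; exact hMnorm P hP
          _ = ‖Q y‖ := one_mul _
      calc N (x + y) ≤ ‖g‖ * ‖(Q * P) (x + y)‖ := h1
        _ ≤ ‖g‖ * (‖Q (P x)‖ + ‖P (Q y)‖) := by
            rw [h2]; gcongr; exact norm_add_le _ _
        _ ≤ ‖g‖ * (‖P x‖ + ‖Q y‖) := by gcongr
        _ = ‖g‖ * ‖P x‖ + ‖g‖ * ‖Q y‖ := by ring
    have step1 : ∀ P ∈ M, N (x + y) - ‖g‖ * ‖P x‖ ≤ N y := by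
      intro P hP
      apply le_csInf (hne y)
      rintro r ⟨Q, hQ, rfl⟩
      simp only
      linarith [key P hP Q hQ]
    have step2 : N (x + y) - N y ≤ N x := by
      apply le_csInf (hne x)
      rintro r ⟨P, hP, rfl⟩
      simp only
      linarith [step1 P hP]
    linarith
  -- g is dominated by N on Y
  have hf : ∀ y : Y, g y ≤ N (y : X) := by
    intro y
    apply le_csInf (hne _)
    rintro r ⟨P, hP, rfl⟩
    obtain ⟨h1, h2⟩ := hMinv P hP y
    calc g y = g ⟨P (y : X), h1⟩ := h2.symm
      _ ≤ |g ⟨P (y : X), h1⟩| := le_abs_self _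
      _ ≤ ‖g‖ * ‖(⟨P (y : X), h1⟩ : Y)‖ := g.le_opNorm _
      _ = ‖g‖ * ‖P (y : X)‖ := rfl
  -- Hahn–Banach extension
  obtain ⟨φ, hφeq, hφle⟩ :=
    exists_extension_of_le_sublinear ⟨Y, (g : Y →ₗ[ℝ] ℝ)⟩ N N_hom N_add hf
  have hφY : ∀ y : Y, φ y = g y := hφeq
  have hbound : ∀ x, |φ x| ≤ ‖g‖ * ‖x‖ := by
    intro x
    rw [abs_le]
    constructor
    · have := (hφle (-x)).trans (hNx (-x))
      rw [map_neg, norm_neg] at this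
      linarith
    · exact (hφle x).trans (hNx x)
  set Λ : X →L[ℝ] ℝ := φ.mkContinuous ‖g‖ (fun x => by
    rw [Real.norm_eq_abs]; exact hbound x) with hΛ
  have hΛapp : ∀ x, Λ x = φ x := fun x => rfl
  -- invariance under a single operator
  have hfix : ∀ U : X →L[ℝ] X, ‖U‖ ≤ 1 → (∀ n, A U (n+1) ∈ M) → ∀ x, Λ (U x) = Λ x := by
    intro U hU hmem x
    have havg : ∀ n : ℕ, ∀ z : X,
        (A U (n+1)) z = (((n:ℝ)+1))⁻¹ • ∑ i ∈ range (n+1), (U ^ i) z := by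
      intro n z
      rw [hA]
      push_cast
      simp [ContinuousLinearMap.sum_apply]
    have htel : ∀ n : ℕ, (A U (n+1)) (x - U x) = (((n:ℝ)+1))⁻¹ • (x - (U ^ (n+1)) x) := by
      intro n
      rw [havg]
      congr 1
      have : ∀ i, (U ^ i) (x - U x) = (U ^ i) x - (U ^ (i+1)) x := by
        intro i
        simp [map_sub, pow_succ, ContinuousLinearMap.mul_apply]
      simp only [this]
      rw [Finset.sum_range_sub' (f := fun i => (U ^ i) x)]
      simp
    have hnorm : ∀ n : ℕ, ‖(A U (n+1)) (x - U x)‖ ≤ (((n:ℝ)+1))⁻¹ * (2 * ‖x‖) := by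
      intro n
      rw [htel n, norm_smul, Real.norm_eq_abs, abs_of_pos (by positivity)]
      gcongr
      calc ‖x - (U ^ (n+1)) x‖ ≤ ‖x‖ + ‖(U ^ (n+1)) x‖ := norm_sub_le _ _
        _ ≤ ‖x‖ + ‖x‖ := by
            gcongr
            calc ‖(U ^ (n+1)) x‖ ≤ ‖U ^ (n+1)‖ * ‖x‖ := (U ^ (n+1)).le_opNorm x
              _ ≤ 1 * ‖x‖ := by
                  gcongr
                  exact le_trans (norm_pow_le' U n.succ_pos) (pow_le_one₀ (norm_nonneg U) hU)
              _ = ‖x‖ := one_mul _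
        _ = 2 * ‖x‖ := by ring
    have hNz : ∀ z : X, (∀ n : ℕ, ‖(A U (n+1)) z‖ ≤ (((n:ℝ)+1))⁻¹ * (2 * ‖x‖)) → N z ≤ 0 := by
      intro z hz
      by_contra hlt
      push_neg at hlt
      obtain ⟨n, hn⟩ := exists_nat_gt (‖g‖ * (2 * ‖x‖) / N z)
      have h1 : N z ≤ ‖g‖ * ‖(A U (n+1)) z‖ := hNle z _ (hmem n)
      have h2 : ‖g‖ * ‖(A U (n+1)) z‖ ≤ ‖g‖ * ((((n:ℝ)+1))⁻¹ * (2 * ‖x‖)) := by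
        gcongr
        exact hz n
      have hn1 : (0:ℝ) < (n:ℝ) + 1 := by positivity
      have hc5 : N z * ((n:ℝ)+1) ≤ ‖g‖ * (2 * ‖x‖) := by
        have h6 := mul_le_mul_of_nonneg_right (h1.trans h2) hn1.le
        calc N z * ((n:ℝ)+1) ≤ ‖g‖ * ((((n:ℝ)+1))⁻¹ * (2 * ‖x‖)) * ((n:ℝ)+1) := h6
          _ = ‖g‖ * (2 * ‖x‖) * ((((n:ℝ)+1))⁻¹ * ((n:ℝ)+1)) := by ring
          _ = ‖g‖ * (2 * ‖x‖) := by rw [inv_mul_cancel₀ hn1.ne', mul_one]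
      have hd : ‖g‖ * (2 * ‖x‖) < (n:ℝ) * N z := by
        rw [div_lt_iff₀ hlt] at hn
        linarith [hn]
      nlinarith [hc5, hd, hlt]
    have hle1 : Λ (x - U x) ≤ 0 :=
      le_trans (hφle _) (hNz _ hnorm)
    have hle2 : Λ (U x - x) ≤ 0 := by
      refine le_trans (hφle _) (hNz _ ?_)
      intro n
      rw [show U x - x = -(x - U x) from (neg_sub x (U x)).symm, map_neg, norm_neg]
      exact hnorm n
    have e1 : Λ (x - U x) = Λ x - Λ (U x) := by rw [map_sub]
    have e2 : Λ (U x - x) = Λ (U x) - Λ x := by rw [map_sub]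
    rw [e1] at hle1
    rw [e2] at hle2
    linarith
  refine ⟨Λ, fun y => hφY y, ?_, ?_, ?_⟩
  · -- norm
    apply le_antisymm
    · exact LinearMap.mkContinuous_norm_le φ (norm_nonneg g) _
    · apply g.opNorm_le_bound (norm_nonneg Λ)
      intro y
      calc ‖g y‖ = ‖Λ (y : X)‖ := by rw [hΛapp, hφY]
        _ ≤ ‖Λ‖ * ‖(y : X)‖ := Λ.le_opNorm _
        _ = ‖Λ‖ * ‖y‖ := rfl
  · ext x
    exact hfix T hTnorm hATmem x
  · ext x
    exact hfix S hSnorm hASmem x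
end
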